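/- arXiv:2503.10840 — 7 statements merged into one kernel-verified Lean document; each statement's English description precedes it below -/
import Mathlib

section
/- Let h_p, w_p ∈ ℕ_{>0} be pooling window sizes, p_h, p_w ∈ ℕ padding sizes, s_h, s_w ∈ ℕ_{>0} strides, and x ∈ ℝ^{c_x×h_x×w_x} an input tensor. Let h_y, w_y ∈ ℕ_{>0} be the output height and width. Define the average-pooling output y ∈ ℝ^{c_x×h_y×w_y} by y[i_{c_x},i_{h_y},i_{w_y}] = (Σ_{i_{h_p}=1}^{h_p} Σ_{i_{w_p}=1}^{w_p} x̄[i_{c_x},j_h,j_w]) / (h_p·w_p), where j_h = i_{h_p}+(i_{h_y}−1)s_h−p_h, j_w = i_{w_p}+(i_{w_y}−1)s_w−p_w, and x̄[i_{c_x},j_h,j_w] = x[i_{c_x},j_h,j_w] if 1 ≤ j_h ≤ h_x and 1 ≤ j_w ≤ w_x, and 0 otherwise. Let x̃ and ỹ be the row-major flattenings of x and y. Then ỹ = W^{ap}·W̃^{p}·x̃, where W̃^{p} ∈ ℝ^{(c_x·(h_x+2p_h)·(w_x+2p_w))×(c_x·h_x·w_x)} is the zero matrix except for entries equal to 1 at row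 𝔦_row = (i_{c_x}−1)(h_x+2p_h)(w_x+2p_w) + p_h(w_x+2p_w) + (i_{h_x}−1)(w_x+2p_w) + p_w + i_{w_x} and column 𝔦_col = (i_{c_x}−1)h_x·w_x + (i_{h_x}−1)w_x + i_{w_x} for all i_{c_x} ∈ [c_x], i_{h_x} ∈ [h_x], i_{w_x} ∈ [w_x], and W^{ap} ∈ ℝ^{(c_x·h_y·w_y)×(c_x·(h_x+2p_h)·(w_x+2p_w))} is the zero matrix except for entries equal to 1/(h_p·w_p) at row 𝔧_row = (i_{c_x}−1)h_y·w_y + (i_{h_y}−1)w_y + i_{w_y} and column 𝔧_col = (i_{c_x}−1)(h_x+2p_h)(w_x+2p_w) + (i_{w_y}−1)s_w + i_{w_p} + (i_{h_p}−1)(w_x+2p_w) + (i_{h_y}−1)(w_x+2p_w)s_h, for all i_{c_x} ∈ [c_x], i_{h_y} ∈ [h_y], i_{w_y} ∈ [w_y], i_{h_p} ∈ [h_p], i_{w_p} ∈ [w_p]. -/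
/-!
Fix an output position, i.e. a channel `icx` and a window `(ihy, iwy)`. In the corresponding row
of `W^{ap}` the only nonzero entries are `1 / (h_p w_p)`, at the `h_p w_p` distinct positions of the
window in the padded tensor; the row of `W̃ᵖ` at a padded position selects the matching entry of
`x`, or is zero in the padding. So `(W^{ap} W̃ᵖ x̃)` at that position is the mean of the
zero-padded window. All index bookkeeping reduces to the bijection `(i, k) ↦ (i - 1) n + k`
from `[c] × [n]` onto `[c n]`.
-/

open Finset

/-- `(r, c)` is one of the positions of the `1` entries of the padding matrix `W̃ᵖ`:
`r = 𝔦_row = (i_cx−1)(h_x+2p_h)(w_x+2p_w) + p_h(w_x+2p_w) + (i_hx−1)(w_x+2p_w) + p_w + i_wx`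
and `c = 𝔦_col = (i_cx−1)h_x·w_x + (i_hx−1)w_x + i_wx` for some `i_cx ∈ [c_x]`,
`i_hx ∈ [h_x]`, `i_wx ∈ [w_x]` (1-based indices). -/
def IsPadEntry (cx hx wx ph pw : ℕ) (r c : ℕ) : Prop :=
  ∃ icx ∈ Icc 1 cx, ∃ ihx ∈ Icc 1 hx, ∃ iwx ∈ Icc 1 wx,
    r = (icx - 1) * ((hx + 2 * ph) * (wx + 2 * pw)) + ph * (wx + 2 * pw) +
          (ihx - 1) * (wx + 2 * pw) + pw + iwx ∧
    c = (icx - 1) * (hx * wx) + (ihx - 1) * wx + iwx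

/-- The row index `𝔧_row = (i_cx−1)h_y·w_y + (i_hy−1)w_y + i_wy` of `W^{ap}`. -/
def apRow (hy wy : ℕ) (icx ihy iwy : ℕ) : ℕ :=
  (icx - 1) * (hy * wy) + (ihy - 1) * wy + iwy

/-- The column index `𝔧_col = (i_cx−1)(h_x+2p_h)(w_x+2p_w) + (i_wy−1)s_w + i_wp
+ (i_hp−1)(w_x+2p_w) + (i_hy−1)(w_x+2p_w)s_h` of `W^{ap}`. -/
def apCol (hx wx ph pw sh sw : ℕ) (icx ihy iwy ihp iwp : ℕ) : ℕ :=
  (icx - 1) * ((hx + 2 * ph) * (wx + 2 * pw)) + (iwy - 1) * sw + iwp +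
    (ihp - 1) * (wx + 2 * pw) + (ihy - 1) * ((wx + 2 * pw) * sh)

def pairIdx (n i k : ℕ) : ℕ := (i - 1) * n + k

def flatIdx (m n i j k : ℕ) : ℕ := (i - 1) * (m * n) + (j - 1) * n + k

theorem pairIdx_mem_Icc {c n i k : ℕ} (hi : i ∈ Icc 1 c) (hk : k ∈ Icc 1 n) :
    pairIdx n i k ∈ Icc 1 (c * n) := by
  rw [mem_Icc] at *
  obtain ⟨i, rfl⟩ := Nat.exists_eq_add_of_le' hi.1
  unfold pairIdx
  rw [Nat.add_sub_cancel]
  constructor <;> nlinarith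

theorem pairIdx_inj {n i k i' k' : ℕ} (hi : 1 ≤ i) (hi' : 1 ≤ i') (hk : k ∈ Icc 1 n)
    (hk' : k' ∈ Icc 1 n) (h : pairIdx n i k = pairIdx n i' k') : i = i' ∧ k = k' := by
  rw [mem_Icc] at hk hk'
  have hn : 0 < n := by omega
  have hdiv : ∀ a b, b < n → (a * n + b) / n = a ∧ (a * n + b) % n = b := fun a b hb =>
    (Nat.div_mod_unique hn).2 ⟨by ring, hb⟩
  have h' : (i - 1) * n + (k - 1) = (i' - 1) * n + (k' - 1) := by unfold pairIdx at h; omega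
  obtain ⟨hq, hr⟩ := hdiv (i - 1) (k - 1) (by omega)
  obtain ⟨hq', hr'⟩ := hdiv (i' - 1) (k' - 1) (by omega)
  rw [h'] at hq hr
  omega

theorem exists_pairIdx_eq {c n p : ℕ} (hp : p ∈ Icc 1 (c * n)) :
    ∃ i ∈ Icc 1 c, ∃ k ∈ Icc 1 n, p = pairIdx n i k := by
  rw [mem_Icc] at hp
  have hn : 0 < n := Nat.pos_of_ne_zero fun h => by rw [h, mul_zero] at hp; omega
  refine ⟨(p - 1) / n + 1, ?_, (p - 1) % n + 1, ?_, ?_⟩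
  · rw [mem_Icc]
    refine ⟨Nat.le_add_left 1 _, Nat.div_lt_of_lt_mul ?_⟩
    rw [mul_comm n c]; omega
  · rw [mem_Icc]
    exact ⟨by omega, Nat.mod_lt _ hn⟩
  · unfold pairIdx
    rw [Nat.add_sub_cancel]
    have := Nat.div_add_mod' (p - 1) n
    omega

theorem flatIdx_eq_pairIdx {m n i j k : ℕ} (hj : 1 ≤ j) :
    flatIdx m n i j k = pairIdx n (pairIdx m i j) k := by
  obtain ⟨j, rfl⟩ := Nat.exists_eq_add_of_le' hj
  unfold flatIdx pairIdx
  rw [Nat.add_sub_cancel, Nat.add_sub_assoc le_add_self, Nat.add_sub_cancel]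
  ring

theorem flatIdx_mem_Icc {c m n i j k : ℕ} (hi : i ∈ Icc 1 c) (hj : j ∈ Icc 1 m)
    (hk : k ∈ Icc 1 n) : flatIdx m n i j k ∈ Icc 1 (c * (m * n)) := by
  rw [flatIdx_eq_pairIdx (mem_Icc.1 hj).1, ← mul_assoc]
  exact pairIdx_mem_Icc (pairIdx_mem_Icc hi hj) hk

theorem flatIdx_inj {m n i j k i' j' k' : ℕ} (hi : 1 ≤ i) (hj : j ∈ Icc 1 m) (hk : k ∈ Icc 1 n)
    (hi' : 1 ≤ i') (hj' : j' ∈ Icc 1 m) (hk' : k' ∈ Icc 1 n)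
    (h : flatIdx m n i j k = flatIdx m n i' j' k') : i = i' ∧ j = j' ∧ k = k' := by
  rw [flatIdx_eq_pairIdx (mem_Icc.1 hj).1, flatIdx_eq_pairIdx (mem_Icc.1 hj').1] at h
  have hpos : ∀ {a b}, 1 ≤ a → b ∈ Icc 1 m → 1 ≤ pairIdx m a b := fun _ hb => by
    unfold pairIdx; have := (mem_Icc.1 hb).1; omega
  obtain ⟨hij, rfl⟩ := pairIdx_inj (hpos hi hj) (hpos hi' hj') hk hk' h
  obtain ⟨rfl, rfl⟩ := pairIdx_inj hi hi' hj hj' hij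
  exact ⟨rfl, rfl, rfl⟩

theorem exists_flatIdx_eq {c m n p : ℕ} (hp : p ∈ Icc 1 (c * (m * n))) :
    ∃ i ∈ Icc 1 c, ∃ j ∈ Icc 1 m, ∃ k ∈ Icc 1 n, p = flatIdx m n i j k := by
  rw [← mul_assoc] at hp
  obtain ⟨t, ht, k, hk, rfl⟩ := exists_pairIdx_eq hp
  obtain ⟨i, hi, j, hj, rfl⟩ := exists_pairIdx_eq ht
  exact ⟨i, hi, j, hj, k, hk, (flatIdx_eq_pairIdx (mem_Icc.1 hj).1).symm⟩

theorem padRow_eq_flatIdx {H W ph pw i j k : ℕ} (hj : 1 ≤ j) :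
    (i - 1) * (H * W) + ph * W + (j - 1) * W + pw + k = flatIdx H W i (ph + j) (pw + k) := by
  obtain ⟨j, rfl⟩ := Nat.exists_eq_add_of_le' hj
  unfold flatIdx
  rw [Nat.add_sub_cancel, show ph + (j + 1) - 1 = ph + j by omega]
  ring

theorem isPadEntry_flatIdx_iff {cx hx wx ph pw i j k q : ℕ} (hi : i ∈ Icc 1 cx)
    (hj : j ∈ Icc 1 (hx + 2 * ph)) (hk : k ∈ Icc 1 (wx + 2 * pw)) :
    IsPadEntry cx hx wx ph pw (flatIdx (hx + 2 * ph) (wx + 2 * pw) i j k) q ↔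
      (1 ≤ j - ph ∧ j - ph ≤ hx ∧ 1 ≤ k - pw ∧ k - pw ≤ wx) ∧
        q = flatIdx hx wx i (j - ph) (k - pw) := by
  rw [mem_Icc] at hi hj hk
  constructor
  · rintro ⟨i', hi', j', hj', k', hk', hr, rfl⟩
    rw [mem_Icc] at hi' hj' hk'
    rw [padRow_eq_flatIdx hj'.1] at hr
    obtain ⟨rfl, rfl, rfl⟩ := flatIdx_inj hi.1 (mem_Icc.2 hj) (mem_Icc.2 hk) hi'.1
      (mem_Icc.2 ⟨by omega, by omega⟩) (mem_Icc.2 ⟨by omega, by omega⟩) hr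
    refine ⟨?_, by rw [Nat.add_sub_cancel_left, Nat.add_sub_cancel_left]; rfl⟩
    omega
  · rintro ⟨hin, rfl⟩
    refine ⟨i, mem_Icc.2 hi, j - ph, mem_Icc.2 ⟨hin.1, hin.2.1⟩, k - pw,
      mem_Icc.2 ⟨hin.2.2.1, hin.2.2.2⟩, ?_, rfl⟩
    rw [padRow_eq_flatIdx hin.1, Nat.add_sub_cancel' (by omega), Nat.add_sub_cancel' (by omega)]

theorem sum_padMatrix_mul_eq {cx hx wx ph pw i j k : ℕ} {x : ℕ → ℕ → ℕ → ℝ} {xt : ℕ → ℝ}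
    {Wp : ℕ → ℕ → ℝ}
    (hxt : ∀ icx ∈ Icc 1 cx, ∀ ihx ∈ Icc 1 hx, ∀ iwx ∈ Icc 1 wx,
      xt ((icx - 1) * (hx * wx) + (ihx - 1) * wx + iwx) = x icx ihx iwx)
    (hWp1 : ∀ r c : ℕ, IsPadEntry cx hx wx ph pw r c → Wp r c = 1)
    (hWp0 : ∀ r c : ℕ, ¬ IsPadEntry cx hx wx ph pw r c → Wp r c = 0)
    (hi : i ∈ Icc 1 cx) (hj : j ∈ Icc 1 (hx + 2 * ph)) (hk : k ∈ Icc 1 (wx + 2 * pw)) :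
    ∑ q ∈ Icc 1 (cx * (hx * wx)), Wp (flatIdx (hx + 2 * ph) (wx + 2 * pw) i j k) q * xt q =
      if 1 ≤ j - ph ∧ j - ph ≤ hx ∧ 1 ≤ k - pw ∧ k - pw ≤ wx then x i (j - ph) (k - pw)
      else 0 := by
  split_ifs with hin
  · have hWp : ∀ q, Wp (flatIdx (hx + 2 * ph) (wx + 2 * pw) i j k) q =
        if q = flatIdx hx wx i (j - ph) (k - pw) then 1 else 0 := fun q => by
      split_ifs with hq
      · exact hWp1 _ _ ((isPadEntry_flatIdx_iff hi hj hk).2 ⟨hin, hq⟩)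
      · exact hWp0 _ _ fun h => hq ((isPadEntry_flatIdx_iff hi hj hk).1 h).2
    have hjx : j - ph ∈ Icc 1 hx := mem_Icc.2 ⟨hin.1, hin.2.1⟩
    have hkx : k - pw ∈ Icc 1 wx := mem_Icc.2 ⟨hin.2.2.1, hin.2.2.2⟩
    simp only [hWp, ite_mul, one_mul, zero_mul, sum_ite_eq',
      if_pos (flatIdx_mem_Icc hi hjx hkx)]
    exact hxt i hi _ hjx _ hkx
  · refine sum_eq_zero fun q _ => ?_
    rw [hWp0 _ _ fun h => hin ((isPadEntry_flatIdx_iff hi hj hk).1 h).1, zero_mul]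

theorem apCol_eq_flatIdx {hx wx ph pw sh sw icx ihy iwy a b : ℕ} (ha : 1 ≤ a) :
    apCol hx wx ph pw sh sw icx ihy iwy a b =
      flatIdx (hx + 2 * ph) (wx + 2 * pw) icx (a + (ihy - 1) * sh) (b + (iwy - 1) * sw) := by
  obtain ⟨a, rfl⟩ := Nat.exists_eq_add_of_le' ha
  unfold apCol flatIdx
  rw [Nat.add_sub_cancel, show a + 1 + (ihy - 1) * sh - 1 = a + (ihy - 1) * sh by omega]
  ring

/-- The output-size formula keeps every pooling window inside the padded input. -/
theorem add_sub_one_mul_mem_Icc {X p s k n a j : ℕ} (hn : n = (X + p + s - k) / s)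
    (ha : a ∈ Icc 1 k) (hj : j ∈ Icc 1 n) : a + (j - 1) * s ∈ Icc 1 (X + 2 * p) := by
  rw [mem_Icc] at ha hj ⊢
  have hs : 0 < s := Nat.pos_of_ne_zero fun h => by rw [h, Nat.div_zero] at hn; omega
  have hns : n * s ≤ X + p + s - k := hn ▸ Nat.div_mul_le_self _ _
  have hjs : (j - 1) * s + s ≤ n * s := by
    rw [← Nat.succ_mul, Nat.succ_eq_add_one, Nat.sub_add_cancel hj.1]
    exact Nat.mul_le_mul_right _ hj.2
  have := hjs.trans hns
  omega

theorem sum_poolMatrix_mul_eq {cx hx wx hp wp ph pw sh sw hy wy icx ihy iwy : ℕ}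
    {Wap : ℕ → ℕ → ℝ}
    (hhy : hy = (hx + ph + sh - hp) / sh) (hwy : wy = (wx + pw + sw - wp) / sw)
    (hWap1 : ∀ icx ∈ Icc 1 cx, ∀ ihy ∈ Icc 1 hy, ∀ iwy ∈ Icc 1 wy,
      ∀ ihp ∈ Icc 1 hp, ∀ iwp ∈ Icc 1 wp,
        Wap (apRow hy wy icx ihy iwy) (apCol hx wx ph pw sh sw icx ihy iwy ihp iwp) =
          1 / (hp * wp))
    (hWap0 : ∀ r c : ℕ,
      (¬ ∃ icx ∈ Icc 1 cx, ∃ ihy ∈ Icc 1 hy, ∃ iwy ∈ Icc 1 wy,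
          ∃ ihp ∈ Icc 1 hp, ∃ iwp ∈ Icc 1 wp,
            r = apRow hy wy icx ihy iwy ∧
            c = apCol hx wx ph pw sh sw icx ihy iwy ihp iwp) → Wap r c = 0)
    (hicx : icx ∈ Icc 1 cx) (hihy : ihy ∈ Icc 1 hy) (hiwy : iwy ∈ Icc 1 wy) (v : ℕ → ℝ) :
    ∑ r ∈ Icc 1 (cx * ((hx + 2 * ph) * (wx + 2 * pw))), Wap (apRow hy wy icx ihy iwy) r * v r =
      (∑ a ∈ Icc 1 hp, ∑ b ∈ Icc 1 wp,
        v (flatIdx (hx + 2 * ph) (wx + 2 * pw) icx (a + (ihy - 1) * sh) (b + (iwy - 1) * sw))) /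
        (hp * wp) := by
  set window : ℕ × ℕ → ℕ := fun z =>
    flatIdx (hx + 2 * ph) (wx + 2 * pw) icx (z.1 + (ihy - 1) * sh) (z.2 + (iwy - 1) * sw)
  have hrow {a} (ha : a ∈ Icc 1 hp) := add_sub_one_mul_mem_Icc hhy ha hihy
  have hcol {b} (hb : b ∈ Icc 1 wp) := add_sub_one_mul_mem_Icc hwy hb hiwy
  rw [← sum_product', sum_div]
  symm
  refine sum_of_injOn window ?_ ?_ ?_ ?_
  · rintro ⟨a, b⟩ hab ⟨a', b'⟩ hab' h
    simp only [coe_product, Set.mem_prod, mem_coe] at hab hab'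
    obtain ⟨-, ha, hb⟩ := flatIdx_inj (mem_Icc.1 hicx).1 (hrow hab.1) (hcol hab.2)
      (mem_Icc.1 hicx).1 (hrow hab'.1) (hcol hab'.2) h
    simp only [Prod.mk.injEq]
    omega
  · rintro ⟨a, b⟩ hab
    simp only [coe_product, Set.mem_prod, mem_coe] at hab
    exact flatIdx_mem_Icc hicx (hrow hab.1) (hcol hab.2)
  · intro r _ hr
    rw [hWap0, zero_mul]
    rintro ⟨icx', hicx', ihy', hihy', iwy', hiwy', a, ha, b, hb, hpos, rfl⟩
    obtain ⟨rfl, rfl, rfl⟩ := flatIdx_inj (mem_Icc.1 hicx).1 hihy hiwy (mem_Icc.1 hicx').1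
      hihy' hiwy' hpos
    exact hr ⟨(a, b), mem_coe.2 (mem_product.2 ⟨ha, hb⟩), (apCol_eq_flatIdx (mem_Icc.1 ha).1).symm⟩
  · rintro ⟨a, b⟩ hab
    rw [mem_product] at hab
    dsimp only [window]
    rw [← apCol_eq_flatIdx (mem_Icc.1 hab.1).1, hWap1 icx hicx ihy hihy iwy hiwy a hab.1 b hab.2,
      one_div_mul_eq_div]

theorem avgpool_layer_eq_linear_general
    -- dimensions and hyperparameters
    (cx hx wx : ℕ) (hp wp : ℕ) (ph pw : ℕ)
    (sh sw : ℕ)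
    (hy wy : ℕ)
    (hhy : hy = (hx + ph + sh - hp) / sh) (hwy : wy = (wx + pw + sw - wp) / sw)
    -- input tensor
    (x : ℕ → ℕ → ℕ → ℝ)
    -- the average-pooling output y
    (y : ℕ → ℕ → ℕ → ℝ)
    (hydef : ∀ icx ∈ Icc 1 cx, ∀ ihy ∈ Icc 1 hy, ∀ iwy ∈ Icc 1 wy,
      y icx ihy iwy = (∑ ihp ∈ Icc 1 hp, ∑ iwp ∈ Icc 1 wp,
        (if 1 ≤ ihp + (ihy - 1) * sh - ph ∧ ihp + (ihy - 1) * sh - ph ≤ hx ∧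
            1 ≤ iwp + (iwy - 1) * sw - pw ∧ iwp + (iwy - 1) * sw - pw ≤ wx then
          x icx (ihp + (ihy - 1) * sh - ph) (iwp + (iwy - 1) * sw - pw)
        else 0)) / (hp * wp))
    -- row-major flattenings x̃ and ỹ
    (xt : ℕ → ℝ)
    (hxt : ∀ icx ∈ Icc 1 cx, ∀ ihx ∈ Icc 1 hx, ∀ iwx ∈ Icc 1 wx,
      xt ((icx - 1) * (hx * wx) + (ihx - 1) * wx + iwx) = x icx ihx iwx)
    (yt : ℕ → ℝ)
    (hyt : ∀ icx ∈ Icc 1 cx, ∀ ihy ∈ Icc 1 hy, ∀ iwy ∈ Icc 1 wy,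
      yt ((icx - 1) * (hy * wy) + (ihy - 1) * wy + iwy) = y icx ihy iwy)
    -- the padding matrix W̃ᵖ
    (Wp : ℕ → ℕ → ℝ)
    (hWp1 : ∀ r c : ℕ, IsPadEntry cx hx wx ph pw r c → Wp r c = 1)
    (hWp0 : ∀ r c : ℕ, ¬ IsPadEntry cx hx wx ph pw r c → Wp r c = 0)
    -- the average-pooling matrix W^{ap}
    (Wap : ℕ → ℕ → ℝ)
    (hWap1 : ∀ icx ∈ Icc 1 cx, ∀ ihy ∈ Icc 1 hy, ∀ iwy ∈ Icc 1 wy,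
      ∀ ihp ∈ Icc 1 hp, ∀ iwp ∈ Icc 1 wp,
        Wap (apRow hy wy icx ihy iwy) (apCol hx wx ph pw sh sw icx ihy iwy ihp iwp) =
          1 / (hp * wp))
    (hWap0 : ∀ r c : ℕ,
      (¬ ∃ icx ∈ Icc 1 cx, ∃ ihy ∈ Icc 1 hy, ∃ iwy ∈ Icc 1 wy,
          ∃ ihp ∈ Icc 1 hp, ∃ iwp ∈ Icc 1 wp,
            r = apRow hy wy icx ihy iwy ∧
            c = apCol hx wx ph pw sh sw icx ihy iwy ihp iwp) → Wap r c = 0) :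
    -- conclusion: ỹ = W^{ap}·W̃^{p}·x̃
    ∀ p ∈ Icc 1 (cx * (hy * wy)),
      yt p = ∑ q ∈ Icc 1 (cx * (hx * wx)),
        (∑ r ∈ Icc 1 (cx * ((hx + 2 * ph) * (wx + 2 * pw))), Wap p r * Wp r q) * xt q := by
  intro p hp_mem
  obtain ⟨icx, hicx, ihy, hihy, iwy, hiwy, rfl⟩ := exists_flatIdx_eq hp_mem
  calc yt (flatIdx hy wy icx ihy iwy) = y icx ihy iwy := hyt icx hicx ihy hihy iwy hiwy
    _ = (∑ a ∈ Icc 1 hp, ∑ b ∈ Icc 1 wp, ∑ q ∈ Icc 1 (cx * (hx * wx)),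
          Wp (flatIdx (hx + 2 * ph) (wx + 2 * pw) icx (a + (ihy - 1) * sh) (b + (iwy - 1) * sw)) q *
            xt q) / ((hp : ℝ) * wp) := by
      rw [hydef icx hicx ihy hihy iwy hiwy]
      refine congrArg (· / _) (sum_congr rfl fun a ha => sum_congr rfl fun b hb => ?_)
      rw [sum_padMatrix_mul_eq hxt hWp1 hWp0 hicx (add_sub_one_mul_mem_Icc hhy ha hihy)
        (add_sub_one_mul_mem_Icc hwy hb hiwy)]
    _ = ∑ r ∈ Icc 1 (cx * ((hx + 2 * ph) * (wx + 2 * pw))),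
          Wap (apRow hy wy icx ihy iwy) r * ∑ q ∈ Icc 1 (cx * (hx * wx)), Wp r q * xt q :=
      (sum_poolMatrix_mul_eq hhy hwy hWap1 hWap0 hicx hihy hiwy
        fun r => ∑ q ∈ Icc 1 (cx * (hx * wx)), Wp r q * xt q).symm
    _ = _ := by
      simp_rw [mul_sum, sum_mul, mul_assoc]
      exact sum_comm

/-- Lemma 2 of the paper: an average pooling layer equals a linear map on
row-major flattened vectors: `ỹ = W^{ap}·W̃^{p}·x̃`.

Tensors are encoded as functions of their 1-based indices, matrices as functions of their
1-based row/column indices, and vectors as functions of their 1-based positions; all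
index formulas match the statement. -/
theorem avgpool_layer_eq_linear
    -- dimensions and hyperparameters
    (cx hx wx : ℕ) (hp wp : ℕ) (hhp : 0 < hp) (hwp : 0 < wp) (ph pw : ℕ)
    (sh sw : ℕ) (hsh : 0 < sh) (hsw : 0 < sw)
    (hy wy : ℕ) (hhy0 : 0 < hy) (hwy0 : 0 < wy)
    (hhy : hy = (hx + ph + sh - hp) / sh) (hwy : wy = (wx + pw + sw - wp) / sw)
    -- input tensor
    (x : ℕ → ℕ → ℕ → ℝ)
    -- the average-pooling output y
    (y : ℕ → ℕ → ℕ → ℝ)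
    (hydef : ∀ icx ∈ Icc 1 cx, ∀ ihy ∈ Icc 1 hy, ∀ iwy ∈ Icc 1 wy,
      y icx ihy iwy = (∑ ihp ∈ Icc 1 hp, ∑ iwp ∈ Icc 1 wp,
        (if 1 ≤ ihp + (ihy - 1) * sh - ph ∧ ihp + (ihy - 1) * sh - ph ≤ hx ∧
            1 ≤ iwp + (iwy - 1) * sw - pw ∧ iwp + (iwy - 1) * sw - pw ≤ wx then
          x icx (ihp + (ihy - 1) * sh - ph) (iwp + (iwy - 1) * sw - pw)
        else 0)) / (hp * wp))
    -- row-major flattenings x̃ and ỹ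
    (xt : ℕ → ℝ)
    (hxt : ∀ icx ∈ Icc 1 cx, ∀ ihx ∈ Icc 1 hx, ∀ iwx ∈ Icc 1 wx,
      xt ((icx - 1) * (hx * wx) + (ihx - 1) * wx + iwx) = x icx ihx iwx)
    (yt : ℕ → ℝ)
    (hyt : ∀ icx ∈ Icc 1 cx, ∀ ihy ∈ Icc 1 hy, ∀ iwy ∈ Icc 1 wy,
      yt ((icx - 1) * (hy * wy) + (ihy - 1) * wy + iwy) = y icx ihy iwy)
    -- the padding matrix W̃ᵖ
    (Wp : ℕ → ℕ → ℝ)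
    (hWp1 : ∀ r c : ℕ, IsPadEntry cx hx wx ph pw r c → Wp r c = 1)
    (hWp0 : ∀ r c : ℕ, ¬ IsPadEntry cx hx wx ph pw r c → Wp r c = 0)
    -- the average-pooling matrix W^{ap}
    (Wap : ℕ → ℕ → ℝ)
    (hWap1 : ∀ icx ∈ Icc 1 cx, ∀ ihy ∈ Icc 1 hy, ∀ iwy ∈ Icc 1 wy,
      ∀ ihp ∈ Icc 1 hp, ∀ iwp ∈ Icc 1 wp,
        Wap (apRow hy wy icx ihy iwy) (apCol hx wx ph pw sh sw icx ihy iwy ihp iwp) =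
          1 / (hp * wp))
    (hWap0 : ∀ r c : ℕ,
      (¬ ∃ icx ∈ Icc 1 cx, ∃ ihy ∈ Icc 1 hy, ∃ iwy ∈ Icc 1 wy,
          ∃ ihp ∈ Icc 1 hp, ∃ iwp ∈ Icc 1 wp,
            r = apRow hy wy icx ihy iwy ∧
            c = apCol hx wx ph pw sh sw icx ihy iwy ihp iwp) → Wap r c = 0) :
    -- conclusion: ỹ = W^{ap}·W̃^{p}·x̃
    ∀ p ∈ Icc 1 (cx * (hy * wy)),
      yt p = ∑ q ∈ Icc 1 (cx * (hx * wx)),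
        (∑ r ∈ Icc 1 (cx * ((hx + 2 * ph) * (wx + 2 * pw))), Wap p r * Wp r q) * xt q :=
  avgpool_layer_eq_linear_general cx hx wx hp wp ph pw sh sw hy wy hhy hwy x y hydef xt hxt yt hyt
    Wp hWp1 hWp0 Wap hWap1 hWap0
end

section
/- Let π_F be an ℓ-layer ReLU FFNN with weight matrices W^(k) ∈ ℝ^{n_k×n_{k−1}} and bias vectors v^(k) ∈ ℝ^{n_k} for k ∈ [ℓ], let Z ⊆ ℝ^{n_0} be an input set, and fix k ∈ [ℓ−1]. Let J = ∏_{j=1}^{n_k} [α_j, β_j] ⊆ ℝ^{n_k} be an interval that contains the k-th layer activation x^(k)(x) for every x ∈ Z, where x^(0)(x) = x and x^(i)(x) = σ(W^(i) x^(i−1)(x) + v^(i)) for i ∈ [ℓ−1]. Let N ⊆ [n_k] and N̄ = [n_k] \ N. Define the reduced network π̂_F with bias-error set as follows: it has the same layers as π_F except that layer k uses Ŵ^(k) = W^(k)_{[N̄,:]} (the rows of W^(k) indexed by N̄) and v̂^(k) = v^(k)_{[N̄]}, and layer k+1 uses Ŵ^(k+1) = W^(k+1)_{[:,N̄]} (the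 columns of W^(k+1) indexed by N̄) together with any bias of the form v^(k+1) + e with e ∈ ε, where ε = { W^(k+1)_{[:,N]} u : u ∈ ∏_{j∈N} [α_j, β_j] } ⊆ ℝ^{n_{k+1}}. Then for every x ∈ Z there exists e ∈ ε such that π_F(x) equals the output of the reduced network evaluated at x with bias v^(k+1) + e at layer k+1; that is, π_F(x) ∈ π̂_F(x) for all x ∈ Z. -/
open Finset

/-! The reduced network agrees with the original one on every kept neuron of every hidden
layer: the only layer whose input changes is `k + 1`, and there the dropped contribution
`W^(k+1)_{[:,N]} x^(k)_{[N]}` is exactly the bias perturbation `e`. It lies in `ε` because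
`x^(k)` lies in the interval `J`. -/

theorem Finset.sum_sdiff_add_sum_of_eqOn {ι M : Type*} [DecidableEq ι] [AddCommMonoid M]
    {s N : Finset ι} (hN : N ⊆ s) {f g : ι → M} (hfg : ∀ j ∈ s \ N, g j = f j) :
    ∑ j ∈ s \ N, g j + ∑ j ∈ N, f j = ∑ j ∈ s, f j := by
  rw [sum_congr rfl hfg, sum_sdiff hN]

section NeuronReduction

variable {n : ℕ → ℕ} {W : ℕ → ℕ → ℕ → ℝ} {X : ℕ → (ℕ → ℝ) → ℕ → ℝ}
  {Xr : (ℕ → ℝ) → (ℕ → ℝ) → ℕ → ℕ → ℝ} {k : ℕ} {N Nbar : Finset ℕ} {D : ℕ → Finset ℕ}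

theorem reduced_preactivation_eq (hN : N ⊆ Icc 1 (n k)) (hNbar : Nbar = Icc 1 (n k) \ N)
    (hD : ∀ kk, D kk = if kk = k then Nbar else Icc 1 (n kk))
    {x e : ℕ → ℝ} (he : ∀ i, e i = ∑ j ∈ N, W (k + 1) i j * X k x j)
    {m : ℕ} (hagree : ∀ j ∈ D m, Xr x e m j = X m x j) (b : ℝ) (i : ℕ) :
    ∑ j ∈ D m, W (m + 1) i j * Xr x e m j + b + (if m + 1 = k + 1 then e i else 0) =
      ∑ j ∈ Icc 1 (n m), W (m + 1) i j * X m x j + b := by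
  subst hNbar
  rw [hD] at hagree ⊢
  by_cases hmk : m = k
  · subst hmk
    simp only [if_true, he] at hagree ⊢
    rw [← sum_sdiff_add_sum_of_eqOn hN (g := fun j => W (m + 1) i j * Xr x e m j)
      fun j hj => by rw [hagree j hj]]
    ring
  · simp only [hmk, if_false, Nat.add_right_cancel_iff, add_zero] at hagree ⊢
    exact congrArg (· + b) (sum_congr rfl fun j hj => by rw [hagree j hj])

theorem reduced_activation_eq {ℓ : ℕ} {v : ℕ → ℕ → ℝ}
    (hX0 : ∀ x i, X 0 x i = x i)
    (hXrec : ∀ kk, 1 ≤ kk → kk ≤ ℓ - 1 → ∀ x, ∀ i ∈ Icc 1 (n kk),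
      X kk x i = max ((∑ j ∈ Icc 1 (n (kk - 1)), W kk i j * X (kk - 1) x j) + v kk i) 0)
    (hN : N ⊆ Icc 1 (n k)) (hNbar : Nbar = Icc 1 (n k) \ N)
    (hD : ∀ kk, D kk = if kk = k then Nbar else Icc 1 (n kk))
    (hXr0 : ∀ x e i, Xr x e 0 i = x i)
    (hXrrec : ∀ x e kk, 1 ≤ kk → kk ≤ ℓ - 1 → ∀ i ∈ D kk,
      Xr x e kk i = max ((∑ j ∈ D (kk - 1), W kk i j * Xr x e (kk - 1) j) + v kk i +
        (if kk = k + 1 then e i else 0)) 0)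
    {x e : ℕ → ℝ} (he : ∀ i, e i = ∑ j ∈ N, W (k + 1) i j * X k x j) :
    ∀ m ≤ ℓ - 1, ∀ i ∈ D m, Xr x e m i = X m x i := by
  have hD_sub : ∀ m, D m ⊆ Icc 1 (n m) := fun m => by
    rw [hD]; split_ifs with hmk
    · exact hmk ▸ hNbar ▸ sdiff_subset
    · exact Subset.rfl
  intro m
  induction m with
  | zero => intro _ i _; rw [hXr0, hX0]
  | succ m ih =>
    intro hm i hi
    rw [hXrrec x e (m + 1) m.succ_pos hm i hi, hXrec (m + 1) m.succ_pos hm x i (hD_sub _ hi),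
      Nat.add_sub_cancel, reduced_preactivation_eq hN hNbar hD he (ih (by omega))]

end NeuronReduction

theorem neuron_reduction_overapprox_general
    (ℓ : ℕ)
    (n : ℕ → ℕ)
    (W : ℕ → ℕ → ℕ → ℝ) (v : ℕ → ℕ → ℝ)
    (Z : Set (ℕ → ℝ))
    -- original network activations
    (X : ℕ → (ℕ → ℝ) → ℕ → ℝ)
    (hX0 : ∀ x i, X 0 x i = x i)
    (hXrec : ∀ kk, 1 ≤ kk → kk ≤ ℓ - 1 → ∀ x, ∀ i ∈ Icc 1 (n kk),
      X kk x i = max ((∑ j ∈ Icc 1 (n (kk - 1)), W kk i j * X (kk - 1) x j) + v kk i) 0)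
    -- the reduced layer k ∈ [ℓ-1] and the interval bound J = ∏ [α j, β j]
    (k : ℕ) (hk1 : 1 ≤ k) (hk2 : k ≤ ℓ - 1)
    (α β : ℕ → ℝ)
    (hJ : ∀ x ∈ Z, ∀ j ∈ Icc 1 (n k), α j ≤ X k x j ∧ X k x j ≤ β j)
    -- reduced neurons N and remaining neurons N̄
    (N : Finset ℕ) (hN : N ⊆ Icc 1 (n k))
    (Nbar : Finset ℕ) (hNbar : Nbar = Icc 1 (n k) \ N)
    -- index sets of the layers of the reduced network
    (D : ℕ → Finset ℕ) (hD : ∀ kk, D kk = if kk = k then Nbar else Icc 1 (n kk))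
    -- reduced network activations (with bias perturbation e added at layer k+1)
    (Xr : (ℕ → ℝ) → (ℕ → ℝ) → ℕ → ℕ → ℝ)
    (hXr0 : ∀ x e i, Xr x e 0 i = x i)
    (hXrrec : ∀ x e kk, 1 ≤ kk → kk ≤ ℓ - 1 → ∀ i ∈ D kk,
      Xr x e kk i = max ((∑ j ∈ D (kk - 1), W kk i j * Xr x e (kk - 1) j) + v kk i +
        (if kk = k + 1 then e i else 0)) 0)
    -- the bias error set ε = { W^(k+1)_{[:,N]} u : u ∈ ∏_{j∈N} [α j, β j] }
    (ε : Set (ℕ → ℝ))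
    (hε : ε = {e | ∃ u : ℕ → ℝ, (∀ j ∈ N, α j ≤ u j ∧ u j ≤ β j) ∧
      ∀ i, e i = ∑ j ∈ N, W (k + 1) i j * u j}) :
    ∀ x ∈ Z, ∃ e ∈ ε, ∀ i ∈ Icc 1 (n ℓ),
      (∑ j ∈ Icc 1 (n (ℓ - 1)), W ℓ i j * X (ℓ - 1) x j) + v ℓ i =
        (∑ j ∈ D (ℓ - 1), W ℓ i j * Xr x e (ℓ - 1) j) + v ℓ i +
          (if ℓ = k + 1 then e i else 0) := by
  intro x hx
  set e : ℕ → ℝ := fun i => ∑ j ∈ N, W (k + 1) i j * X k x j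
  have he : ∀ i, e i = ∑ j ∈ N, W (k + 1) i j * X k x j := fun _ => rfl
  have he_mem : e ∈ ε := hε ▸ ⟨X k x, fun j hj => hJ x hx j (hN hj), fun _ => rfl⟩
  obtain ⟨m, rfl⟩ : ∃ m, ℓ = m + 1 := ⟨ℓ - 1, by omega⟩
  have hagree := reduced_activation_eq hX0 hXrec hN hNbar hD hXr0 hXrrec he m (by omega)
  refine ⟨e, he_mem, fun i _ => ?_⟩
  simp only [Nat.add_sub_cancel]
  exact (reduced_preactivation_eq hN hNbar hD he hagree _ i).symm

/-- Lemma 4 of the paper: neuron reduction with a compensating interval bias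
over-approximates the original network.

An `ℓ`-layer ReLU FFNN is encoded with 1-based indexing: layer `kk ∈ [ℓ]` has `n kk`
neurons indexed by `Finset.Icc 1 (n kk)`, weights `W kk i j` and biases `v kk i`; the
input dimension is `n 0`.  The family `X kk x` gives the layer-`kk` activations of the
original network on input `x` (`X 0 x = x`, `X kk x = σ(W^(kk) X (kk-1) x + v^(kk))` for
`kk ∈ [ℓ−1]`), and `π_F(x) = W^(ℓ) X (ℓ-1) x + v^(ℓ)`.

For a fixed layer `k ∈ [ℓ−1]`, an interval `J = ∏_j [α j, β j]` containing the layer-`k`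
activations over the input set `Z`, and a set `N ⊆ [n k]` of reduced neurons with
complement `N̄`, the reduced network keeps only the rows of `W^(k)`, `v^(k)` indexed by
`N̄` and the columns of `W^(k+1)` indexed by `N̄` (encoded by restricting the index set of
layer `k` to `N̄` via `D`), and adds a bias perturbation `e ∈ ε` at layer `k+1`, where
`ε = { W^(k+1)_{[:,N]} u : u ∈ ∏_{j∈N} [α j, β j] }`; the family `Xr x e kk` gives its
activations. Then for every `x ∈ Z` there exists `e ∈ ε` such that `π_F(x)` equals the
output of the reduced network with bias `v^(k+1) + e`, i.e. `π_F(x) ∈ π̂_F(x)`. -/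
theorem neuron_reduction_overapprox
    (ℓ : ℕ) (hℓ : 1 ≤ ℓ)
    (n : ℕ → ℕ)
    (W : ℕ → ℕ → ℕ → ℝ) (v : ℕ → ℕ → ℝ)
    (Z : Set (ℕ → ℝ))
    -- original network activations
    (X : ℕ → (ℕ → ℝ) → ℕ → ℝ)
    (hX0 : ∀ x i, X 0 x i = x i)
    (hXrec : ∀ kk, 1 ≤ kk → kk ≤ ℓ - 1 → ∀ x, ∀ i ∈ Icc 1 (n kk),
      X kk x i = max ((∑ j ∈ Icc 1 (n (kk - 1)), W kk i j * X (kk - 1) x j) + v kk i) 0)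
    -- the reduced layer k ∈ [ℓ-1] and the interval bound J = ∏ [α j, β j]
    (k : ℕ) (hk1 : 1 ≤ k) (hk2 : k ≤ ℓ - 1)
    (α β : ℕ → ℝ)
    (hab : ∀ j ∈ Icc 1 (n k), α j ≤ β j)
    (hJ : ∀ x ∈ Z, ∀ j ∈ Icc 1 (n k), α j ≤ X k x j ∧ X k x j ≤ β j)
    -- reduced neurons N and remaining neurons N̄
    (N : Finset ℕ) (hN : N ⊆ Icc 1 (n k))
    (Nbar : Finset ℕ) (hNbar : Nbar = Icc 1 (n k) \ N)
    -- index sets of the layers of the reduced network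
    (D : ℕ → Finset ℕ) (hD : ∀ kk, D kk = if kk = k then Nbar else Icc 1 (n kk))
    -- reduced network activations (with bias perturbation e added at layer k+1)
    (Xr : (ℕ → ℝ) → (ℕ → ℝ) → ℕ → ℕ → ℝ)
    (hXr0 : ∀ x e i, Xr x e 0 i = x i)
    (hXrrec : ∀ x e kk, 1 ≤ kk → kk ≤ ℓ - 1 → ∀ i ∈ D kk,
      Xr x e kk i = max ((∑ j ∈ D (kk - 1), W kk i j * Xr x e (kk - 1) j) + v kk i +
        (if kk = k + 1 then e i else 0)) 0)
    -- the bias error set ε = { W^(k+1)_{[:,N]} u : u ∈ ∏_{j∈N} [α j, β j] }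
    (ε : Set (ℕ → ℝ))
    (hε : ε = {e | ∃ u : ℕ → ℝ, (∀ j ∈ N, α j ≤ u j ∧ u j ≤ β j) ∧
      ∀ i, e i = ∑ j ∈ N, W (k + 1) i j * u j}) :
    ∀ x ∈ Z, ∃ e ∈ ε, ∀ i ∈ Icc 1 (n ℓ),
      (∑ j ∈ Icc 1 (n (ℓ - 1)), W ℓ i j * X (ℓ - 1) x j) + v ℓ i =
        (∑ j ∈ D (ℓ - 1), W ℓ i j * Xr x e (ℓ - 1) j) + v ℓ i +
          (if ℓ = k + 1 then e i else 0) :=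
  neuron_reduction_overapprox_general ℓ n W v Z X hX0 hXrec k hk1 hk2 α β hJ N hN Nbar hNbar D hD Xr
    hXr0 hXrrec ε hε
end

section
/- Let W ∈ ℝ^{m×n}, ρ ≥ 0, and for each j ∈ [n] let α_j ≤ β_j be reals. Define h_j = ( Σ_{i=1}^m |W_{[i,j]}| ) · (β_j − α_j) for j ∈ [n] and let N = { j ∈ [n] : h_j ≤ ρ }. Let ε = { W_{[:,N]} u : u ∈ ∏_{j∈N} [α_j, β_j] } ⊆ ℝ^m, and for each i ∈ [m] let ε̄_i = sup { e_i : e ∈ ε } and ε̲_i = inf { e_i : e ∈ ε }. Then Σ_{i=1}^m (ε̄_i − ε̲_i) ≤ ρ · |N|, where |N| is the cardinality of N. -/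
open scoped Classical

/-- The interval-valued bias error set
`ε = { W_{[:,N]} u : u ∈ ∏_{j∈N} [α_j, β_j] } ⊆ ℝᵐ`. -/
def errSet {m n : ℕ} (W : Matrix (Fin m) (Fin n) ℝ) (N : Finset (Fin n))
    (α β : Fin n → ℝ) : Set (Fin m → ℝ) :=
  {e | ∃ u : Fin n → ℝ, (∀ j ∈ N, α j ≤ u j ∧ u j ≤ β j) ∧
    e = fun i => ∑ j ∈ N, W i j * u j}

/-!
Coordinate `i` of a point of the error set is `∑_{j ∈ N} W_{ij} u_j` with `u_j ∈ [α_j, β_j]`, so it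
ranges over an interval of length at most `∑_{j ∈ N} |W_{ij}| (β_j - α_j)`. Summing over `i` and
exchanging the sums turns the total width into `∑_{j ∈ N} h_j`, and each `h_j ≤ ρ` by the choice
of `N`.
-/

open Set

lemma sSup_sub_sInf_le_of_subset_Icc {s : Set ℝ} {a b : ℝ} (hs : s.Nonempty)
    (hsub : s ⊆ Icc a b) : sSup s - sInf s ≤ b - a := by
  have hsup : sSup s ≤ b := csSup_le hs fun x hx => (hsub hx).2
  have hinf : a ≤ sInf s := le_csInf hs fun x hx => (hsub hx).1
  linarith

lemma mul_mem_uIcc_of_mem_Icc {w a b u : ℝ} (hu : u ∈ Icc a b) : w * u ∈ uIcc (w * a) (w * b) := by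
  rw [← image_const_mul_uIcc]
  exact mem_image_of_mem _ (Icc_subset_uIcc hu)

lemma max_mul_sub_min_mul {w a b : ℝ} (hab : a ≤ b) :
    max (w * a) (w * b) - min (w * a) (w * b) = |w| * (b - a) := by
  rw [max_sub_min_eq_abs, ← mul_sub, abs_mul, abs_of_nonneg (sub_nonneg.2 hab)]

section errSet

variable {m n : ℕ} (W : Matrix (Fin m) (Fin n) ℝ) {N : Finset (Fin n)} {α β : Fin n → ℝ}

lemma errSet_nonempty (hab : ∀ j ∈ N, α j ≤ β j) : (errSet W N α β).Nonempty :=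
  ⟨_, α, fun j hj => ⟨le_rfl, hab j hj⟩, rfl⟩

lemma apply_mem_Icc_of_mem_errSet {e : Fin m → ℝ} (he : e ∈ errSet W N α β) (i : Fin m) :
    e i ∈ Icc (∑ j ∈ N, min (W i j * α j) (W i j * β j))
      (∑ j ∈ N, max (W i j * α j) (W i j * β j)) := by
  obtain ⟨u, hu, rfl⟩ := he
  have hmem : ∀ j ∈ N, W i j * u j ∈ uIcc (W i j * α j) (W i j * β j) :=
    fun j hj => mul_mem_uIcc_of_mem_Icc (hu j hj)
  exact ⟨Finset.sum_le_sum fun j hj => (hmem j hj).1, Finset.sum_le_sum fun j hj => (hmem j hj).2⟩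

lemma sSup_sub_sInf_errSet_apply_le (hab : ∀ j ∈ N, α j ≤ β j) (i : Fin m) :
    sSup ((fun e => e i) '' errSet W N α β) - sInf ((fun e => e i) '' errSet W N α β) ≤
      ∑ j ∈ N, |W i j| * (β j - α j) := by
  calc _ ≤ ∑ j ∈ N, max (W i j * α j) (W i j * β j) - ∑ j ∈ N, min (W i j * α j) (W i j * β j) :=
        sSup_sub_sInf_le_of_subset_Icc ((errSet_nonempty W hab).image _)
          (image_subset_iff.2 fun _ he => apply_mem_Icc_of_mem_errSet W he i)
    _ = ∑ j ∈ N, |W i j| * (β j - α j) := by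
        rw [← Finset.sum_sub_distrib]
        exact Finset.sum_congr rfl fun j hj => max_mul_sub_min_mul (hab j hj)

end errSet

theorem size_errSet_le_general {m n : ℕ} (W : Matrix (Fin m) (Fin n) ℝ) (ρ : ℝ)
    (α β : Fin n → ℝ) (hab : ∀ j, α j ≤ β j)
    (N : Finset (Fin n))
    (hN : N = Finset.univ.filter (fun j => (∑ i : Fin m, |W i j|) * (β j - α j) ≤ ρ)) :
    ∑ i : Fin m,
        (sSup ((fun e => e i) '' errSet W N α β) - sInf ((fun e => e i) '' errSet W N α β)) ≤
      ρ * N.card := by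
  calc _ ≤ ∑ i : Fin m, ∑ j ∈ N, |W i j| * (β j - α j) :=
        Finset.sum_le_sum fun i _ => sSup_sub_sInf_errSet_apply_le W (fun j _ => hab j) i
    _ = ∑ j ∈ N, (∑ i : Fin m, |W i j|) * (β j - α j) := by
        simp only [Finset.sum_comm (s := Finset.univ), Finset.sum_mul]
    _ ≤ ∑ _j ∈ N, ρ := Finset.sum_le_sum fun j hj => by
        subst hN
        exact (Finset.mem_filter.mp hj).2
    _ = ρ * N.card := by rw [Finset.sum_const, nsmul_eq_mul, mul_comm]

/-- with `h_j = (Σ_{i=1}^m |W_{[i,j]}|)·(β_j − α_j)` and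
`N = {j ∈ [n] : h_j ≤ ρ}` (the neuron set selected by Algorithm 1), the error set
`ε = { W_{[:,N]} u : u ∈ ∏_{j∈N} [α_j, β_j] }` satisfies
`Σ_{i=1}^m (ε̄_i − ε̲_i) ≤ ρ·|N|`. -/
theorem size_errSet_le {m n : ℕ} (W : Matrix (Fin m) (Fin n) ℝ) (ρ : ℝ) (hρ : 0 ≤ ρ)
    (α β : Fin n → ℝ) (hab : ∀ j, α j ≤ β j)
    (N : Finset (Fin n))
    (hN : N = Finset.univ.filter (fun j => (∑ i : Fin m, |W i j|) * (β j - α j) ≤ ρ)) :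
    ∑ i : Fin m,
        (sSup ((fun e => e i) '' errSet W N α β) - sInf ((fun e => e i) '' errSet W N α β)) ≤
      ρ * N.card :=
  size_errSet_le_general W ρ α β hab N hN
end

section
/- Let Z ⊆ ℝ^{n_0} be a hybrid zonotope and let π_F be an ℓ-layer ReLU FFNN with weight matrices W^(k) ∈ ℝ^{n_k×n_{k−1}} and bias vectors v^(k) ∈ ℝ^{n_k} for k ∈ [ℓ]. Then the reachable set R_{π_F}(Z) = { π_F(x) : x ∈ Z } ⊆ ℝ^{n_ℓ} is a hybrid zonotope. -/
/-!
Call a set a hybrid zonotope in coordinate-free form if it is the image under an affine map of a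
hybrid cube (coordinates in `[-1, 1]`, the binary ones in `{-1, 1}`) cut out by an affine
equation. These sets are closed under affine images, finite products and intersection with affine
equations, hence under taking images by relations that are themselves hybrid zonotopes. They are bounded, say by `M`, and on `[-M, M]` the graph of ReLU is a hybrid
zonotope (a big-M encoding with one binary variable), so the componentwise ReLU of a hybrid
zonotope is one too. Induction over the layers finishes the proof.
-/

/-- A set `Z ⊆ ℝ^d` is a hybrid zonotope if it is of the form
`{Gᶜ ξᶜ + Gᵇ ξᵇ + c : ξᶜ ∈ [−1,1]^{n_g}, ξᵇ ∈ {−1,1}^{n_b}, Aᶜ ξᶜ + Aᵇ ξᵇ = b}`. -/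
def IsHybridZonotope {d : ℕ} (Z : Set (Fin d → ℝ)) : Prop :=
  ∃ (ng nb nc : ℕ) (c : Fin d → ℝ) (Gc : Matrix (Fin d) (Fin ng) ℝ)
    (Gb : Matrix (Fin d) (Fin nb) ℝ) (Ac : Matrix (Fin nc) (Fin ng) ℝ)
    (Ab : Matrix (Fin nc) (Fin nb) ℝ) (b : Fin nc → ℝ),
    Z = {z | ∃ (ξc : Fin ng → ℝ) (ξb : Fin nb → ℝ),
      (∀ i, |ξc i| ≤ 1) ∧ (∀ i, ξb i = -1 ∨ ξb i = 1) ∧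
      Ac.mulVec ξc + Ab.mulVec ξb = b ∧
      z = Gc.mulVec ξc + Gb.mulVec ξb + c}

/-- The hidden-layer activations of a ReLU feedforward network: `act n W v 0 x = x` and
`act n W v k x = σ(W^(k) · act n W v (k-1) x + v^(k))` for `k ≥ 1`, where `σ` is the
componentwise ReLU. -/
def act (n : ℕ → ℕ) (W : (k : ℕ) → Matrix (Fin (n k)) (Fin (n (k - 1))) ℝ)
    (v : (k : ℕ) → Fin (n k) → ℝ) : (k : ℕ) → (Fin (n 0) → ℝ) → (Fin (n k) → ℝ)
  | 0 => fun x => x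
  | (k + 1) => fun x i => max ((W (k + 1)).mulVec (act n W v k x) i + v (k + 1) i) 0

open Set Matrix

def hybridCube {V : Type*} (bin : V → Prop) : Set (V → ℝ) :=
  {ξ | ∀ v, |ξ v| ≤ 1 ∧ (bin v → ξ v = -1 ∨ ξ v = 1)}

/-- The generators `Gᶜ, Gᵇ, c` and the constraints `Aᶜ, Aᵇ, b` of `IsHybridZonotope` become the
affine maps `f` and `g` of a single parameter vector whose binary coordinates are those in `bin`;
see `isHybridZonotope'_iff`. -/
def IsHybridZonotope' {E : Type*} [AddCommGroup E] [Module ℝ E] (Z : Set E) : Prop :=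
  ∃ (V : Type) (_ : Fintype V) (bin : V → Prop) (F : Type) (_ : AddCommGroup F) (_ : Module ℝ F)
    (_ : FiniteDimensional ℝ F) (f : (V → ℝ) →ᵃ[ℝ] E) (g : (V → ℝ) →ᵃ[ℝ] F),
    Z = f '' (hybridCube bin ∩ g ⁻¹' {0})

namespace IsHybridZonotope'

variable {E E' : Type*} [AddCommGroup E] [Module ℝ E] [AddCommGroup E'] [Module ℝ E']
  {Z : Set E}

theorem image (hZ : IsHybridZonotope' Z) (φ : E →ᵃ[ℝ] E') : IsHybridZonotope' (φ '' Z) := by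
  obtain ⟨V, _, bin, F, _, _, _, f, g, rfl⟩ := hZ
  exact ⟨V, inferInstance, bin, F, inferInstance, inferInstance, inferInstance, φ.comp f, g,
    by rw [AffineMap.coe_comp, image_comp]⟩

theorem image_mulVec_add {ι κ : Type*} [Fintype κ] {Z : Set (κ → ℝ)}
    (hZ : IsHybridZonotope' Z) (W : Matrix ι κ ℝ) (v : ι → ℝ) :
    IsHybridZonotope' ((fun x => W *ᵥ x + v) '' Z) := by
  classical
  exact hZ.image ((toLin' W).toAffineMap + AffineMap.const ℝ _ v)

theorem inter_preimage (hZ : IsHybridZonotope' Z) [FiniteDimensional ℝ E'] (φ : E →ᵃ[ℝ] E') :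
    IsHybridZonotope' (Z ∩ φ ⁻¹' {0}) := by
  obtain ⟨V, _, bin, F, _, _, _, f, g, rfl⟩ := hZ
  let b := (Module.finBasis ℝ E').equivFun.toLinearMap.toAffineMap
  refine ⟨V, inferInstance, bin, F × (Fin (Module.finrank ℝ E') → ℝ), inferInstance,
    inferInstance, inferInstance, f, g.prod (b.comp (φ.comp f)), ?_⟩
  rw [← image_inter_preimage, inter_assoc]
  congr 2
  ext ξ
  simp [b]

theorem prod {Z' : Set E'} (hZ : IsHybridZonotope' Z) (hZ' : IsHybridZonotope' Z') :
    IsHybridZonotope' (Z ×ˢ Z') := by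
  obtain ⟨V, _, bin, F, _, _, _, f, g, rfl⟩ := hZ
  obtain ⟨V', _, bin', F', _, _, _, f', g', rfl⟩ := hZ'
  let e := (LinearEquiv.sumArrowLequivProdArrow V V' ℝ ℝ).toLinearMap.toAffineMap
  have he : Function.Surjective e := (LinearEquiv.sumArrowLequivProdArrow V V' ℝ ℝ).surjective
  refine ⟨V ⊕ V', inferInstance, Sum.elim bin bin', F × F', inferInstance, inferInstance,
    inferInstance, (f.prodMap f').comp e, (g.prodMap g').comp e, ?_⟩
  have hcube : hybridCube (Sum.elim bin bin') ∩ (g.prodMap g').comp e ⁻¹' {0} =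
      e ⁻¹' ((hybridCube bin ∩ g ⁻¹' {0}) ×ˢ (hybridCube bin' ∩ g' ⁻¹' {0})) := by
    ext ξ
    simp [e, hybridCube, Sum.forall, and_and_and_comm]
  rw [hcube, AffineMap.coe_comp, image_comp, image_preimage_eq _ he, AffineMap.coe_prodMap,
    prodMap_image_prod]

theorem pi {ι : Type} [Fintype ι] {E : ι → Type*} [∀ i, AddCommGroup (E i)]
    [∀ i, Module ℝ (E i)] {Z : ∀ i, Set (E i)} (hZ : ∀ i, IsHybridZonotope' (Z i)) :
    IsHybridZonotope' (univ.pi Z) := by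
  choose V _ bin F _ _ _ f g hZ using hZ
  let e := (LinearEquiv.piCurry ℝ fun i (_ : V i) => ℝ).toLinearMap.toAffineMap
  have he : Function.Surjective e := (LinearEquiv.piCurry ℝ fun i (_ : V i) => ℝ).surjective
  let f' := AffineMap.pi fun i => (f i).comp ((LinearMap.proj i).toAffineMap.comp e)
  let g' := AffineMap.pi fun i => (g i).comp ((LinearMap.proj i).toAffineMap.comp e)
  refine ⟨Σ i, V i, inferInstance, fun p => bin p.1 p.2, ∀ i, F i, inferInstance, inferInstance,
    inferInstance, f', g', ?_⟩
  have hcube : hybridCube (fun p : Σ i, V i => bin p.1 p.2) ∩ g' ⁻¹' {0} =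
      e ⁻¹' univ.pi fun i => hybridCube (bin i) ∩ g i ⁻¹' {0} := by
    ext ξ
    simp [g', e, hybridCube, Sigma.forall, funext_iff, Sigma.curry, forall_and]
  have hf' : ⇑f' = Pi.map (fun i => f i) ∘ e := rfl
  rw [hcube, hf', image_comp, image_preimage_eq _ he, piMap_image_univ_pi]
  exact congrArg _ (funext hZ)

theorem setRel_image [FiniteDimensional ℝ E] {T : SetRel E E'} (hZ : IsHybridZonotope' Z)
    (hT : IsHybridZonotope' T) : IsHybridZonotope' (T.image Z) := by
  let link : E × (E × E') →ₗ[ℝ] E :=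
    LinearMap.fst _ _ _ - (LinearMap.fst _ _ _).comp (LinearMap.snd _ _ _)
  let out : E × (E × E') →ₗ[ℝ] E' := (LinearMap.snd _ _ _).comp (LinearMap.snd _ _ _)
  convert ((hZ.prod hT).inter_preimage link.toAffineMap).image out.toAffineMap
  ext y
  simp [link, out, SetRel.image, sub_eq_zero]

theorem isBounded {E : Type*} [NormedAddCommGroup E] [NormedSpace ℝ E] {Z : Set E}
    (hZ : IsHybridZonotope' Z) : Bornology.IsBounded Z := by
  obtain ⟨V, _, bin, F, _, _, _, f, g, rfl⟩ := hZ
  have hcube : hybridCube bin ⊆ Metric.closedBall 0 1 := fun ξ hξ =>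
    mem_closedBall_zero_iff.2 ((pi_norm_le_iff_of_nonneg zero_le_one).2 fun v => (hξ v).1)
  exact ((isCompact_closedBall 0 1).image f.continuous_of_finiteDimensional).isBounded.subset
    (image_mono (inter_subset_left.trans hcube))

theorem exists_fin_repr (hZ : IsHybridZonotope' Z) :
    ∃ (ng nb nc : ℕ) (f : (Fin ng ⊕ Fin nb → ℝ) →ᵃ[ℝ] E)
      (g : (Fin ng ⊕ Fin nb → ℝ) →ᵃ[ℝ] (Fin nc → ℝ)),
      Z = f '' (hybridCube (fun w => w.isRight) ∩ g ⁻¹' {0}) := by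
  classical
  obtain ⟨V, _, bin, F, _, _, _, f, g, rfl⟩ := hZ
  let σ : Fin _ ⊕ Fin _ ≃ V :=
    ((Fintype.equivFin {v // ¬ bin v}).symm.sumCongr (Fintype.equivFin {v // bin v}).symm).trans
      ((Equiv.sumComm _ _).trans (Equiv.sumCompl bin))
  have hσ : ∀ w, bin (σ w) ↔ w.isRight := by
    rintro (i | i)
    · simpa [σ] using ((Fintype.equivFin {v // ¬ bin v}).symm i).2
    · simpa [σ] using ((Fintype.equivFin {v // bin v}).symm i).2
  let e := LinearEquiv.funCongrLeft ℝ ℝ σ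
  have hcube : hybridCube bin = e ⁻¹' hybridCube (fun w => w.isRight) := by
    ext ξ
    exact σ.forall_congr_right.symm.trans (forall_congr' fun w => by simp [e, hσ])
  let b := (Module.finBasis ℝ F).equivFun.toLinearMap.toAffineMap
  refine ⟨_, _, _, f.comp e.symm.toLinearMap.toAffineMap,
    b.comp (g.comp e.symm.toLinearMap.toAffineMap), ?_⟩
  rw [AffineMap.coe_comp, image_comp, LinearMap.coe_toAffineMap, LinearEquiv.coe_coe,
    LinearEquiv.image_symm_eq_preimage]
  ext ξ
  simp [hcube, b]

end IsHybridZonotope'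

theorem image_hybridCube_isRight_inter {G B α β : Type*} [Zero β] (f : (G ⊕ B → ℝ) → α)
    (g : (G ⊕ B → ℝ) → β) :
    f '' (hybridCube (fun w => w.isRight) ∩ g ⁻¹' {0}) =
      {z | ∃ (ξc : G → ℝ) (ξb : B → ℝ), (∀ i, |ξc i| ≤ 1) ∧ (∀ i, ξb i = -1 ∨ ξb i = 1) ∧
        g (Sum.elim ξc ξb) = 0 ∧ z = f (Sum.elim ξc ξb)} := by
  ext z
  constructor
  · rintro ⟨ξ, ⟨hξ, hg⟩, rfl⟩
    refine ⟨ξ ∘ Sum.inl, ξ ∘ Sum.inr, fun i => (hξ _).1, fun i => (hξ _).2 rfl,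
      by rwa [Sum.elim_comp_inl_inr], by rw [Sum.elim_comp_inl_inr]⟩
  · rintro ⟨ξc, ξb, hc, hb, hg, rfl⟩
    refine ⟨Sum.elim ξc ξb, ⟨?_, hg⟩, rfl⟩
    rintro (i | i)
    · exact ⟨hc i, by simp⟩
    · exact ⟨by rcases hb i with h | h <;> simp [h], fun _ => hb i⟩

theorem AffineMap.apply_sumElim {G B ι : Type*} [Fintype G] [Fintype B] [DecidableEq G]
    [DecidableEq B] (f : (G ⊕ B → ℝ) →ᵃ[ℝ] (ι → ℝ)) (ξc : G → ℝ) (ξb : B → ℝ) :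
    f (Sum.elim ξc ξb) = (LinearMap.toMatrix' f.linear).toCols₁ *ᵥ ξc +
      (LinearMap.toMatrix' f.linear).toCols₂ *ᵥ ξb + f 0 := by
  rw [← fromCols_mulVec_sumElim, fromCols_toCols, LinearMap.toMatrix'_mulVec]
  exact congrFun f.decomp _

theorem isHybridZonotope'_iff {d : ℕ} {Z : Set (Fin d → ℝ)} :
    IsHybridZonotope' Z ↔ IsHybridZonotope Z := by
  constructor
  · intro hZ
    obtain ⟨ng, nb, nc, f, g, rfl⟩ := hZ.exists_fin_repr
    refine ⟨ng, nb, nc, f 0, (LinearMap.toMatrix' f.linear).toCols₁,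
      (LinearMap.toMatrix' f.linear).toCols₂, (LinearMap.toMatrix' g.linear).toCols₁,
      (LinearMap.toMatrix' g.linear).toCols₂, -g 0, ?_⟩
    rw [image_hybridCube_isRight_inter]
    simp_rw [AffineMap.apply_sumElim, eq_neg_iff_add_eq_zero]
  · rintro ⟨ng, nb, nc, c, Gc, Gb, Ac, Ab, b, rfl⟩
    refine ⟨Fin ng ⊕ Fin nb, inferInstance, fun w => w.isRight, Fin nc → ℝ, inferInstance,
      inferInstance, inferInstance, (toLin' (fromCols Gc Gb)).toAffineMap + AffineMap.const ℝ _ c,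
      (toLin' (fromCols Ac Ab)).toAffineMap - AffineMap.const ℝ _ b, ?_⟩
    rw [image_hybridCube_isRight_inter]
    simp [sub_eq_zero]

/-- Big-M encoding of the graph of ReLU on `[-M, M]`: `x = y - z` with `y = M/2 (a + 1)` and
`z = M/2 (b + 1)` in `[0, M]`, and `y = max x 0` as soon as `y z = 0`. Through the slack variables
`c, d`, the binary `β` forces `a = -1` (so `y = 0`) when `β = -1` and `b = -1` (so `z = 0`) when
`β = 1`. -/
theorem abs_le_and_eq_max_iff {M x y : ℝ} (hM : 0 < M) :
    |x| ≤ M ∧ y = max x 0 ↔ ∃ a b c d β : ℝ, (|a| ≤ 1 ∧ |b| ≤ 1 ∧ |c| ≤ 1 ∧ |d| ≤ 1) ∧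
      (β = -1 ∨ β = 1) ∧ (a + c - β = -1 ∧ b + d + β = -1) ∧
      x = M / 2 * (a - b) ∧ y = M / 2 * (a + 1) := by
  constructor
  · rintro ⟨hx, rfl⟩
    obtain ⟨u, hu, rfl⟩ : ∃ u, |u| ≤ 1 ∧ x = M * u :=
      ⟨x / M, by rwa [abs_div, abs_of_pos hM, div_le_one hM], (mul_div_cancel₀ _ hM.ne').symm⟩
    obtain ⟨hu₁, hu₂⟩ := abs_le.1 hu
    rcases le_total 0 u with h | h
    · refine ⟨2 * u - 1, -1, 1 - 2 * u, -1, 1, ⟨abs_le.2 ⟨by linarith, by linarith⟩, by norm_num,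
        abs_le.2 ⟨by linarith, by linarith⟩, by norm_num⟩, Or.inr rfl, ⟨by ring, by ring⟩, by ring,
        by rw [max_eq_left (mul_nonneg hM.le h)]; ring⟩
    · refine ⟨-1, -2 * u - 1, -1, 2 * u + 1, -1, ⟨by norm_num, abs_le.2 ⟨by linarith, by linarith⟩,
        by norm_num, abs_le.2 ⟨by linarith, by linarith⟩⟩, Or.inl rfl, ⟨by ring, by ring⟩, by ring,
        by rw [max_eq_right (mul_nonpos_of_nonneg_of_nonpos hM.le h)]; ring⟩
  · rintro ⟨a, b, c, d, β, ⟨ha, hb, hc, hd⟩, hβ, ⟨h₁, h₂⟩, rfl, rfl⟩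
    obtain ⟨ha₁, ha₂⟩ := abs_le.1 ha
    obtain ⟨hb₁, hb₂⟩ := abs_le.1 hb
    obtain ⟨hc₁, hc₂⟩ := abs_le.1 hc
    obtain ⟨hd₁, hd₂⟩ := abs_le.1 hd
    rcases hβ with rfl | rfl
    · obtain rfl : a = -1 := by linarith
      rw [max_eq_right (by nlinarith)]
      exact ⟨abs_le.2 ⟨by nlinarith, by nlinarith⟩, by ring⟩
    · obtain rfl : b = -1 := by linarith
      rw [max_eq_left (by nlinarith)]
      exact ⟨abs_le.2 ⟨by nlinarith, by nlinarith⟩, by ring⟩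

theorem isHybridZonotope'_reluGraph {M : ℝ} (hM : 0 < M) :
    IsHybridZonotope' {p : Fin 2 → ℝ | |p 0| ≤ M ∧ p 1 = max (p 0) 0} := by
  rw [isHybridZonotope'_iff]
  refine ⟨4, 1, 2, ![0, M / 2], !![M / 2, -(M / 2), 0, 0; M / 2, 0, 0, 0], 0,
    !![1, 0, 1, 0; 0, 1, 0, 1], !![-1; 1], ![-1, -1], ?_⟩
  ext p
  rw [mem_ofPred_eq, abs_le_and_eq_max_iff hM]
  simp [Fin.exists_fin_succ_pi, Fin.forall_fin_succ, funext_iff, dotProduct, Fin.sum_univ_four,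
    mul_sub, mul_add, ← sub_eq_add_neg]

theorem IsHybridZonotope'.relu_image {ι : Type} [Fintype ι] {Z : Set (ι → ℝ)}
    (hZ : IsHybridZonotope' Z) : IsHybridZonotope' ((fun x i => max (x i) 0) '' Z) := by
  obtain ⟨M, hM, hZM⟩ : ∃ M, 0 < M ∧ ∀ x ∈ Z, ∀ i, |x i| ≤ M := by
    obtain ⟨M, hM⟩ := isBounded_iff_forall_norm_le.1 hZ.isBounded
    exact ⟨max M 1, by positivity, fun x hx i =>
      (norm_le_pi_norm x i).trans ((hM x hx).trans (le_max_left _ _))⟩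
  let L : (ι → Fin 2 → ℝ) →ₗ[ℝ] (ι → ℝ) × (ι → ℝ) :=
    { toFun := fun p => (fun i => p i 0, fun i => p i 1)
      map_add' := fun _ _ => rfl
      map_smul' := fun _ _ => rfl }
  have hgraph := (pi fun _ : ι => isHybridZonotope'_reluGraph hM).image L.toAffineMap
  convert hZ.setRel_image hgraph
  ext y
  constructor
  · rintro ⟨x, hx, rfl⟩
    exact ⟨x, hx, fun i => ![x i, max (x i) 0], fun i _ => ⟨hZM x hx i, rfl⟩, rfl⟩
  · rintro ⟨x, hx, p, hp, hpxy⟩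
    obtain ⟨rfl, rfl⟩ := Prod.ext_iff.1 hpxy
    exact ⟨_, hx, funext fun i => (hp i trivial).2.symm⟩

theorem IsHybridZonotope'.image_act (n : ℕ → ℕ)
    (W : (k : ℕ) → Matrix (Fin (n k)) (Fin (n (k - 1))) ℝ) (v : (k : ℕ) → Fin (n k) → ℝ)
    {Z : Set (Fin (n 0) → ℝ)} (hZ : IsHybridZonotope' Z) (k : ℕ) :
    IsHybridZonotope' (act n W v k '' Z) := by
  induction k with
  | zero => simpa [act] using hZ
  | succ k ih =>
    have hact : act n W v (k + 1) =
        (fun y i => max (y i) 0) ∘ (fun y => W (k + 1) *ᵥ y + v (k + 1)) ∘ act n W v k := rfl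
    rw [hact, image_comp, image_comp]
    exact (ih.image_mulVec_add _ _).relu_image

theorem reachSet_isHybridZonotope_general (n : ℕ → ℕ) (ℓ : ℕ)
    (W : (k : ℕ) → Matrix (Fin (n k)) (Fin (n (k - 1))) ℝ)
    (v : (k : ℕ) → Fin (n k) → ℝ)
    (Z : Set (Fin (n 0) → ℝ)) (hZ : IsHybridZonotope Z) :
    IsHybridZonotope
      {y : Fin (n ℓ) → ℝ | ∃ x ∈ Z, y = (W ℓ).mulVec (act n W v (ℓ - 1) x) + v ℓ} := by
  rw [← isHybridZonotope'_iff]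
  convert ((isHybridZonotope'_iff.2 hZ).image_act n W v (ℓ - 1)).image_mulVec_add (W ℓ) (v ℓ)
    using 1
  ext y
  simp [eq_comm]

/-- for an `ℓ`-layer ReLU FFNN `π_F(x) = W^(ℓ) x^(ℓ−1) + v^(ℓ)` and a hybrid
zonotope input set `Z ⊆ ℝ^{n_0}`, the exact reachable set
`R_{π_F}(Z) = {π_F(x) : x ∈ Z} ⊆ ℝ^{n_ℓ}` is a hybrid zonotope. -/
theorem reachSet_isHybridZonotope (n : ℕ → ℕ) (ℓ : ℕ) (hℓ : 1 ≤ ℓ)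
    (W : (k : ℕ) → Matrix (Fin (n k)) (Fin (n (k - 1))) ℝ)
    (v : (k : ℕ) → Fin (n k) → ℝ)
    (Z : Set (Fin (n 0) → ℝ)) (hZ : IsHybridZonotope Z) :
    IsHybridZonotope
      {y : Fin (n ℓ) → ℝ | ∃ x ∈ Z, y = (W ℓ).mulVec (act n W v (ℓ - 1) x) + v ℓ} :=
  reachSet_isHybridZonotope_general n ℓ W v Z hZ
end

section
/- Let Z₁ ⊆ ℝ^n and Z₂ ⊆ ℝ^m be hybrid zonotopes and let R ∈ ℝ^{m×n}. Then the generalized intersection Z₁ ∩_R Z₂ = { z ∈ Z₁ : R z ∈ Z₂ } is a hybrid zonotope. -/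
/-!
Concatenate the factors of presentations of `Z₁` and `Z₂`. The new constraints are those of
`Z₁` and of `Z₂` side by side, plus `R (Gᶜ₁ ξᶜ₁ + Gᵇ₁ ξᵇ₁ + c₁) = Gᶜ₂ ξᶜ₂ + Gᵇ₂ ξᵇ₂ + c₂`, which is
affine in the concatenated factors; the generators are those of `Z₁`, padded with zero columns.
With factors and constraints indexed by arbitrary finite types, concatenation is indexing by
`Sum` and the matrices are block matrices; `Fintype.equivFin` brings the result back to `Fin`.
-/

open Matrix

section HybridZonotope

variable {ι γ β κ : Type*} [Fintype γ] [Fintype β]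

def hybridZonotope (c : ι → ℝ) (Gc : Matrix ι γ ℝ) (Gb : Matrix ι β ℝ) (Ac : Matrix κ γ ℝ)
    (Ab : Matrix κ β ℝ) (b : κ → ℝ) : Set (ι → ℝ) :=
  {z | ∃ (ξc : γ → ℝ) (ξb : β → ℝ), (∀ i, |ξc i| ≤ 1) ∧ (∀ i, ξb i = -1 ∨ ξb i = 1) ∧
      Ac *ᵥ ξc + Ab *ᵥ ξb = b ∧ z = Gc *ᵥ ξc + Gb *ᵥ ξb + c}

theorem hybridZonotope_submatrix {γ' β' κ' : Type*} [Fintype γ'] [Fintype β']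
    (c : ι → ℝ) (Gc : Matrix ι γ ℝ) (Gb : Matrix ι β ℝ) (Ac : Matrix κ γ ℝ)
    (Ab : Matrix κ β ℝ) (b : κ → ℝ) (eγ : γ' ≃ γ) (eβ : β' ≃ β) (eκ : κ' ≃ κ) :
    hybridZonotope c (Gc.submatrix id eγ) (Gb.submatrix id eβ) (Ac.submatrix eκ eγ)
      (Ab.submatrix eκ eβ) (b ∘ eκ) = hybridZonotope c Gc Gb Ac Ab b := by
  have hκ : Function.Injective fun v : κ → ℝ => v ∘ eκ := eκ.surjective.injective_comp_right
  ext z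
  simp only [hybridZonotope, Set.mem_ofPred_eq, submatrix_mulVec_equiv, ← Pi.add_comp, hκ.eq_iff]
  constructor
  · rintro ⟨ξc, ξb, hξc, hξb, hA, rfl⟩
    exact ⟨ξc ∘ eγ.symm, ξb ∘ eβ.symm, fun i => hξc _, fun i => hξb _, hA, rfl⟩
  · rintro ⟨ξc, ξb, hξc, hξb, hA, rfl⟩
    refine ⟨ξc ∘ eγ, ξb ∘ eβ, fun i => hξc _, fun i => hξb _, ?_⟩
    simpa only [Function.comp_assoc, Equiv.self_comp_symm, Function.comp_id, and_true] using hA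

theorem isHybridZonotope_hybridZonotope [Fintype κ] {d : ℕ} (c : Fin d → ℝ)
    (Gc : Matrix (Fin d) γ ℝ) (Gb : Matrix (Fin d) β ℝ) (Ac : Matrix κ γ ℝ) (Ab : Matrix κ β ℝ)
    (b : κ → ℝ) : IsHybridZonotope (hybridZonotope c Gc Gb Ac Ab b) := by
  let eγ := Fintype.equivFin γ
  let eβ := Fintype.equivFin β
  let eκ := Fintype.equivFin κ
  exact ⟨_, _, _, c, Gc.submatrix id eγ.symm, Gb.submatrix id eβ.symm,
    Ac.submatrix eκ.symm eγ.symm, Ab.submatrix eκ.symm eβ.symm, b ∘ eκ.symm,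
    (hybridZonotope_submatrix c Gc Gb Ac Ab b _ _ _).symm⟩

end HybridZonotope

theorem Matrix.mulVec_add_eq_add_iff {m n α : Type*} [Fintype n] [Ring α] (R : Matrix m n α)
    (x c : n → α) (y d : m → α) : R *ᵥ (x + c) = y + d ↔ R *ᵥ x - y = d - R *ᵥ c := by
  rw [mulVec_add, sub_eq_sub_iff_add_eq_add, add_comm d]

theorem hybridZonotope_generalizedInter {ι₁ ι₂ γ₁ γ₂ β₁ β₂ κ₁ κ₂ : Type*} [Fintype ι₁]
    [Fintype γ₁] [Fintype γ₂] [Fintype β₁] [Fintype β₂]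
    (c₁ : ι₁ → ℝ) (Gc₁ : Matrix ι₁ γ₁ ℝ) (Gb₁ : Matrix ι₁ β₁ ℝ) (Ac₁ : Matrix κ₁ γ₁ ℝ)
    (Ab₁ : Matrix κ₁ β₁ ℝ) (b₁ : κ₁ → ℝ)
    (c₂ : ι₂ → ℝ) (Gc₂ : Matrix ι₂ γ₂ ℝ) (Gb₂ : Matrix ι₂ β₂ ℝ) (Ac₂ : Matrix κ₂ γ₂ ℝ)
    (Ab₂ : Matrix κ₂ β₂ ℝ) (b₂ : κ₂ → ℝ) (R : Matrix ι₂ ι₁ ℝ) :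
    {z | z ∈ hybridZonotope c₁ Gc₁ Gb₁ Ac₁ Ab₁ b₁ ∧ R *ᵥ z ∈ hybridZonotope c₂ Gc₂ Gb₂ Ac₂ Ab₂ b₂} =
      hybridZonotope c₁ (fromCols Gc₁ 0) (fromCols Gb₁ 0)
        (fromRows (fromBlocks Ac₁ 0 0 Ac₂) (fromCols (R * Gc₁) (-Gc₂)))
        (fromRows (fromBlocks Ab₁ 0 0 Ab₂) (fromCols (R * Gb₁) (-Gb₂)))
        (Sum.elim (Sum.elim b₁ b₂) (c₂ - R *ᵥ c₁)) := by
  have hrow (ξc : γ₁ ⊕ γ₂ → ℝ) (ξb : β₁ ⊕ β₂ → ℝ) :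
      fromCols (R * Gc₁) (-Gc₂) *ᵥ ξc + fromCols (R * Gb₁) (-Gb₂) *ᵥ ξb =
        R *ᵥ (Gc₁ *ᵥ (ξc ∘ .inl) + Gb₁ *ᵥ (ξb ∘ .inl)) -
          (Gc₂ *ᵥ (ξc ∘ .inr) + Gb₂ *ᵥ (ξb ∘ .inr)) := by
    simp only [fromCols_mulVec, ← mulVec_mulVec, neg_mulVec, mulVec_add]
    abel
  have hcon (ξc : γ₁ ⊕ γ₂ → ℝ) (ξb : β₁ ⊕ β₂ → ℝ) :
      fromRows (fromBlocks Ac₁ 0 0 Ac₂) (fromCols (R * Gc₁) (-Gc₂)) *ᵥ ξc +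
          fromRows (fromBlocks Ab₁ 0 0 Ab₂) (fromCols (R * Gb₁) (-Gb₂)) *ᵥ ξb =
        Sum.elim (Sum.elim b₁ b₂) (c₂ - R *ᵥ c₁) ↔
      (Ac₁ *ᵥ (ξc ∘ .inl) + Ab₁ *ᵥ (ξb ∘ .inl) = b₁ ∧
          Ac₂ *ᵥ (ξc ∘ .inr) + Ab₂ *ᵥ (ξb ∘ .inr) = b₂) ∧
        R *ᵥ (Gc₁ *ᵥ (ξc ∘ .inl) + Gb₁ *ᵥ (ξb ∘ .inl) + c₁) =
          Gc₂ *ᵥ (ξc ∘ .inr) + Gb₂ *ᵥ (ξb ∘ .inr) + c₂ := by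
    rw [fromRows_mulVec, fromRows_mulVec, ← Sum.elim_add_add, hrow, Sum.elim_eq_iff,
      fromBlocks_mulVec, fromBlocks_mulVec, ← Sum.elim_add_add, Sum.elim_eq_iff,
      mulVec_add_eq_add_iff]
    simp only [zero_mulVec, add_zero, zero_add]
  have hz (ξc : γ₁ ⊕ γ₂ → ℝ) (ξb : β₁ ⊕ β₂ → ℝ) :
      fromCols Gc₁ 0 *ᵥ ξc + fromCols Gb₁ 0 *ᵥ ξb = Gc₁ *ᵥ (ξc ∘ .inl) + Gb₁ *ᵥ (ξb ∘ .inl) := by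
    simp only [fromCols_mulVec, zero_mulVec, add_zero]
  ext z
  simp only [hybridZonotope, Set.mem_ofPred_eq, hcon, hz]
  constructor
  · rintro ⟨⟨ξc₁, ξb₁, hc₁, hb₁, hA₁, rfl⟩, ξc₂, ξb₂, hc₂, hb₂, hA₂, hR⟩
    exact ⟨Sum.elim ξc₁ ξc₂, Sum.elim ξb₁ ξb₂, Sum.forall.2 ⟨hc₁, hc₂⟩, Sum.forall.2 ⟨hb₁, hb₂⟩,
      ⟨⟨hA₁, hA₂⟩, hR⟩, rfl⟩
  · rintro ⟨ξc, ξb, hc, hb, ⟨⟨hA₁, hA₂⟩, hR⟩, rfl⟩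
    exact ⟨⟨_, _, fun i => hc _, fun i => hb _, hA₁, rfl⟩,
      _, _, fun i => hc _, fun i => hb _, hA₂, hR⟩

/-- Hybrid zonotopes are closed under generalized intersection: if `Z₁ ⊆ ℝⁿ`
and `Z₂ ⊆ ℝᵐ` are hybrid zonotopes and `R ∈ ℝ^{m×n}`, then
`Z₁ ∩_R Z₂ = {z ∈ Z₁ : R z ∈ Z₂}` is a hybrid zonotope. -/
theorem isHybridZonotope_generalizedInter {n m : ℕ} (Z₁ : Set (Fin n → ℝ))
    (Z₂ : Set (Fin m → ℝ)) (hZ₁ : IsHybridZonotope Z₁) (hZ₂ : IsHybridZonotope Z₂)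
    (R : Matrix (Fin m) (Fin n) ℝ) :
    IsHybridZonotope {z : Fin n → ℝ | z ∈ Z₁ ∧ R.mulVec z ∈ Z₂} := by
  obtain ⟨_, _, _, c₁, Gc₁, Gb₁, Ac₁, Ab₁, b₁, rfl⟩ := hZ₁
  obtain ⟨_, _, _, c₂, Gc₂, Gb₂, Ac₂, Ab₂, b₂, rfl⟩ := hZ₂
  exact hybridZonotope_generalizedInter c₁ Gc₁ Gb₁ Ac₁ Ab₁ b₁ c₂ Gc₂ Gb₂ Ac₂ Ab₂ b₂ R ▸
    isHybridZonotope_hybridZonotope _ _ _ _ _ _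
end

section
/- Let Z₁ ⊆ ℝ^n and Z₂ ⊆ ℝ^n be hybrid zonotopes. Then their union Z₁ ∪ Z₂ ⊆ ℝ^n is a hybrid zonotope. -/
/-! Each `Zᵢ` is gated by a binary switch `σ`: continuous slack variables `s` with the
constraints `ξ + s = σ - 1` leave the generators `ξ` of `Zᵢ` free when `σ = 1` and force them
all to `-1` when `σ = -1`, and the offsets are chosen so that this corner is feasible and maps
to `0`. The union `Z₁ ∪ Z₂` is then the Minkowski sum of `Z₁` gated by `σ` and `Z₂` gated by
`-σ`, with `σ` a shared binary generator. -/

open Matrix Pointwise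

theorem Sum.exists_elim {α β γ : Type*} {p : (α ⊕ β → γ) → Prop} :
    (∃ f, p f) ↔ ∃ f₁ f₂, p (Sum.elim f₁ f₂) :=
  ⟨fun ⟨f, hf⟩ => ⟨f ∘ Sum.inl, f ∘ Sum.inr, by rwa [Sum.elim_comp_inl_inr]⟩,
    fun ⟨_, _, h⟩ => ⟨_, h⟩⟩

theorem Matrix.replicateCol_mulVec_of_unique {α m ι : Type*} [CommSemiring α] [Unique ι]
    (v : m → α) (τ : ι → α) : replicateCol ι v *ᵥ τ = τ default • v := by
  ext
  simp [mulVec, dotProduct, mul_comm]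

theorem eq_neg_one_of_add_eq_neg_two {ι : Type*} {x s : ι → ℝ} (hx : ∀ i, |x i| ≤ 1)
    (hs : ∀ i, |s i| ≤ 1) (h : x + s = -2) : x = -1 := by
  funext i
  have hi := congrFun h i
  simp only [Pi.add_apply, Pi.neg_apply, Pi.ofNat_apply] at hi
  simp only [Pi.neg_apply, Pi.one_apply]
  linarith [abs_le.mp (hx i), abs_le.mp (hs i)]

structure HybridZonotopeData (d : ℕ) (ιg ιb ιc : Type*) where
  c : Fin d → ℝ
  Gc : Matrix (Fin d) ιg ℝ
  Gb : Matrix (Fin d) ιb ℝ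
  Ac : Matrix ιc ιg ℝ
  Ab : Matrix ιc ιb ℝ
  b : ιc → ℝ

namespace HybridZonotopeData

variable {d : ℕ} {ιg ιb ιc ιg' ιb' ιc' : Type*}

def sum (D : HybridZonotopeData d ιg ιb ιc) (D' : HybridZonotopeData d ιg' ιb' ιc') :
    HybridZonotopeData d (ιg ⊕ ιg') (ιb ⊕ ιb') (ιc ⊕ ιc') where
  c := D.c + D'.c
  Gc := fromCols D.Gc D'.Gc
  Gb := fromCols D.Gb D'.Gb
  Ac := fromBlocks D.Ac 0 0 D'.Ac
  Ab := fromBlocks D.Ab 0 0 D'.Ab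
  b := Sum.elim D.b D'.b

variable [Fintype ιg] [Fintype ιb] [Fintype ιg'] [Fintype ιb']

def toSet (D : HybridZonotopeData d ιg ιb ιc) : Set (Fin d → ℝ) :=
  {z | ∃ (ξc : ιg → ℝ) (ξb : ιb → ℝ), (∀ i, |ξc i| ≤ 1) ∧ (∀ i, ξb i = -1 ∨ ξb i = 1) ∧
    D.Ac *ᵥ ξc + D.Ab *ᵥ ξb = D.b ∧ z = D.Gc *ᵥ ξc + D.Gb *ᵥ ξb + D.c}

theorem isHybridZonotope_toSet [Fintype ιc] (D : HybridZonotopeData d ιg ιb ιc) :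
    IsHybridZonotope D.toSet := by
  set eg := Fintype.equivFin ιg
  set eb := Fintype.equivFin ιb
  set ec := Fintype.equivFin ιc
  refine ⟨_, _, _, D.c, D.Gc.submatrix id eg.symm, D.Gb.submatrix id eb.symm,
    D.Ac.submatrix ec.symm eg.symm, D.Ab.submatrix ec.symm eb.symm, D.b ∘ ec.symm, ?_⟩
  ext z
  simp only [toSet, Set.mem_ofPred_eq, submatrix_mulVec_equiv, Equiv.symm_symm]
  constructor
  · rintro ⟨ξc, ξb, hc, hb, hA, rfl⟩
    refine ⟨ξc ∘ eg.symm, ξb ∘ eb.symm, fun i => hc _, fun i => hb _, ?_, ?_⟩ <;>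
      ext <;> simp [← hA, Function.comp_def]
  · rintro ⟨ξc, ξb, hc, hb, hA, rfl⟩
    refine ⟨ξc ∘ eg, ξb ∘ eb, fun i => hc _, fun i => hb _, ?_, rfl⟩
    simpa [Function.comp_def, funext_iff, ec.symm.surjective.forall] using hA

theorem _root_.IsHybridZonotope.exists_toSet_eq {Z : Set (Fin d → ℝ)} (hZ : IsHybridZonotope Z) :
    ∃ (ng nb nc : ℕ) (D : HybridZonotopeData d (Fin ng) (Fin nb) (Fin nc)), D.toSet = Z := by
  obtain ⟨ng, nb, nc, c, Gc, Gb, Ac, Ab, b, rfl⟩ := hZ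
  exact ⟨ng, nb, nc, ⟨c, Gc, Gb, Ac, Ab, b⟩, rfl⟩

theorem toSet_sum (D : HybridZonotopeData d ιg ιb ιc) (D' : HybridZonotopeData d ιg' ιb' ιc') :
    (D.sum D').toSet = D.toSet + D'.toSet := by
  ext z
  simp only [toSet, sum, Set.mem_ofPred_eq, Set.mem_add, Sum.exists_elim, Sum.forall,
    fromCols_mulVec_sumElim, fromBlocks_mulVec, Sum.elim_comp_inl, Sum.elim_comp_inr,
    Sum.elim_inl, Sum.elim_inr, zero_mulVec, add_zero, zero_add, ← Sum.elim_add_add,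
    Sum.elim_eq_iff]
  constructor
  · rintro ⟨x, x', y, y', ⟨hx, hx'⟩, ⟨hy, hy'⟩, ⟨hA, hA'⟩, rfl⟩
    exact ⟨_, ⟨x, y, hx, hy, hA, rfl⟩, _, ⟨x', y', hx', hy', hA', rfl⟩, by abel⟩
  · rintro ⟨_, ⟨x, y, hx, hy, hA, rfl⟩, _, ⟨x', y', hx', hy', hA', rfl⟩, rfl⟩
    exact ⟨x, x', y, y', ⟨hx, hx'⟩, ⟨hy, hy'⟩, ⟨hA, hA'⟩, by abel⟩

end HybridZonotopeData

/-- Hybrid-zonotope data with one distinguished binary generator, the switch `σ`, whose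
columns in the generator and constraint matrices are `gσ` and `aσ`. -/
structure SwitchedHybridZonotopeData (d : ℕ) (ιg ιb ιc : Type*)
    extends HybridZonotopeData d ιg ιb ιc where
  gσ : Fin d → ℝ
  aσ : ιc → ℝ

namespace SwitchedHybridZonotopeData

variable {d : ℕ} {ιg ιb ιc ιg' ιb' ιc' : Type*}

def fixSwitch (S : SwitchedHybridZonotopeData d ιg ιb ιc) (σ : ℝ) :
    HybridZonotopeData d ιg ιb ιc :=
  { S.toHybridZonotopeData with c := S.c + σ • S.gσ, b := S.b - σ • S.aσ }

def freeSwitch (S : SwitchedHybridZonotopeData d ιg ιb ιc) :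
    HybridZonotopeData d ιg (ιb ⊕ Unit) ιc :=
  { S.toHybridZonotopeData with
    Gb := fromCols S.Gb (replicateCol Unit S.gσ)
    Ab := fromCols S.Ab (replicateCol Unit S.aσ) }

def sum (S : SwitchedHybridZonotopeData d ιg ιb ιc)
    (S' : SwitchedHybridZonotopeData d ιg' ιb' ιc') :
    SwitchedHybridZonotopeData d (ιg ⊕ ιg') (ιb ⊕ ιb') (ιc ⊕ ιc') :=
  { S.toHybridZonotopeData.sum S'.toHybridZonotopeData with
    gσ := S.gσ + S'.gσ
    aσ := Sum.elim S.aσ S'.aσ }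

def negSwitch (S : SwitchedHybridZonotopeData d ιg ιb ιc) :
    SwitchedHybridZonotopeData d ιg ιb ιc :=
  { S with gσ := -S.gσ, aσ := -S.aσ }

theorem fixSwitch_sum (S : SwitchedHybridZonotopeData d ιg ιb ιc)
    (S' : SwitchedHybridZonotopeData d ιg' ιb' ιc') (σ : ℝ) :
    (S.sum S').fixSwitch σ = (S.fixSwitch σ).sum (S'.fixSwitch σ) := by
  simp only [fixSwitch, sum, HybridZonotopeData.sum, HybridZonotopeData.mk.injEq, true_and]
  constructor
  · module
  · ext (i | i) <;> simp

theorem fixSwitch_negSwitch (S : SwitchedHybridZonotopeData d ιg ιb ιc) (σ : ℝ) :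
    S.negSwitch.fixSwitch σ = S.fixSwitch (-σ) := by
  simp [fixSwitch, negSwitch]

theorem toSet_freeSwitch [Fintype ιg] [Fintype ιb] (S : SwitchedHybridZonotopeData d ιg ιb ιc) :
    S.freeSwitch.toSet = (S.fixSwitch 1).toSet ∪ (S.fixSwitch (-1)).toSet := by
  ext z
  simp only [HybridZonotopeData.toSet, freeSwitch, fixSwitch, Set.mem_union, Set.mem_ofPred_eq,
    Sum.exists_elim, Sum.forall, fromCols_mulVec_sumElim, replicateCol_mulVec_of_unique,
    Sum.elim_inl, Sum.elim_inr]
  constructor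
  · rintro ⟨ξc, ξb, τ, hc, ⟨hb, hτ⟩, hA, rfl⟩
    have hA' : S.Ac *ᵥ ξc + S.Ab *ᵥ ξb = S.b - τ default • S.aσ := by rw [← hA]; abel
    rcases hτ () with h | h <;> rw [h] at hA' ⊢
    exacts [.inr ⟨ξc, ξb, hc, hb, hA', by abel⟩, .inl ⟨ξc, ξb, hc, hb, hA', by abel⟩]
  · rintro (⟨ξc, ξb, hc, hb, hA, rfl⟩ | ⟨ξc, ξb, hc, hb, hA, rfl⟩)
    · exact ⟨ξc, ξb, fun _ => 1, hc, ⟨hb, fun _ => .inr rfl⟩, by simp [← add_assoc, hA], by abel⟩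
    · exact ⟨ξc, ξb, fun _ => -1, hc, ⟨hb, fun _ => .inl rfl⟩, by simp [← add_assoc, hA],
        by abel⟩

end SwitchedHybridZonotopeData

namespace HybridZonotopeData

open SwitchedHybridZonotopeData

variable {d : ℕ} {ιg ιb ιc ιg' ιb' ιc' : Type*} [Fintype ιg] [Fintype ιb] [DecidableEq ιg]
  [DecidableEq ιb] [Fintype ιg'] [Fintype ιb'] [DecidableEq ιg'] [DecidableEq ιb']

/-- The offsets solve the linear conditions that make `σ = 1` reproduce `D` and make the
all-`(-1)` corner feasible with output `0` at `σ = -1`. -/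
noncomputable def gate (D : HybridZonotopeData d ιg ιb ιc) :
    SwitchedHybridZonotopeData d (ιg ⊕ (ιg ⊕ ιb)) ιb (ιc ⊕ (ιg ⊕ ιb)) where
  c := (2 : ℝ)⁻¹ • (D.c + D.Gc *ᵥ 1 + D.Gb *ᵥ 1)
  Gc := fromCols D.Gc 0
  Gb := D.Gb
  Ac := fromBlocks D.Ac 0 (fromRows 1 0) 1
  Ab := fromRows D.Ab (fromRows 0 1)
  b := Sum.elim ((2 : ℝ)⁻¹ • (D.b - D.Ac *ᵥ 1 - D.Ab *ᵥ 1)) (-1)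
  gσ := (2 : ℝ)⁻¹ • (D.c - D.Gc *ᵥ 1 - D.Gb *ᵥ 1)
  aσ := Sum.elim (-(2 : ℝ)⁻¹ • (D.b + D.Ac *ᵥ 1 + D.Ab *ᵥ 1)) (-1)

theorem toSet_gate_fixSwitch_one (D : HybridZonotopeData d ιg ιb ιc) :
    (D.gate.fixSwitch 1).toSet = D.toSet := by
  have hc : (D.gate.fixSwitch 1).c = D.c := by simp only [fixSwitch, gate]; module
  have hb : (D.gate.fixSwitch 1).b = Sum.elim D.b 0 := by
    simp only [fixSwitch, gate]; ext (i | i) <;> simp; ring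
  ext z
  simp only [toSet, hc, hb]
  simp only [fixSwitch, gate, Set.mem_ofPred_eq, Sum.exists_elim, Sum.forall, Sum.elim_inl,
    Sum.elim_inr, fromCols_mulVec_sumElim, fromBlocks_mulVec, fromRows_mulVec, Sum.elim_comp_inl,
    Sum.elim_comp_inr, one_mulVec, zero_mulVec, add_zero, zero_add, ← Sum.elim_add_add,
    Sum.elim_eq_iff]
  constructor
  · rintro ⟨x, -, -, y, ⟨hx, -, -⟩, hy, ⟨hA, -⟩, rfl⟩
    exact ⟨x, y, hx, hy, hA, rfl⟩
  · rintro ⟨x, y, hx, hy, hA, rfl⟩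
    refine ⟨x, -x, -y, y, ⟨hx, by simpa using hx, fun i => ?_⟩, hy, ⟨hA, by simp⟩, rfl⟩
    rcases hy i with h | h <;> simp [h]

theorem toSet_gate_fixSwitch_neg_one (D : HybridZonotopeData d ιg ιb ιc) :
    (D.gate.fixSwitch (-1)).toSet = {0} := by
  have hc : (D.gate.fixSwitch (-1)).c = D.Gc *ᵥ 1 + D.Gb *ᵥ 1 := by
    simp only [fixSwitch, gate]; module
  have hb : (D.gate.fixSwitch (-1)).b =
      Sum.elim (-(D.Ac *ᵥ 1 + D.Ab *ᵥ 1)) (Sum.elim (-2) (-2)) := by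
    simp only [fixSwitch, gate]; ext (i | i | i) <;> simp <;> ring
  ext z
  simp only [toSet, hc, hb]
  simp only [fixSwitch, gate, Set.mem_ofPred_eq, Sum.exists_elim, Sum.forall, Sum.elim_inl,
    Sum.elim_inr, fromCols_mulVec_sumElim, fromBlocks_mulVec, fromRows_mulVec, Sum.elim_comp_inl,
    Sum.elim_comp_inr, one_mulVec, zero_mulVec, add_zero, zero_add, ← Sum.elim_add_add,
    Sum.elim_eq_iff, Set.mem_singleton_iff]
  constructor
  · rintro ⟨x, s, t, y, ⟨hx, hs, ht⟩, hy, ⟨-, hxs, hty⟩, rfl⟩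
    have hy' : ∀ i, |y i| ≤ 1 := fun i => by rcases hy i with h | h <;> simp [h]
    rw [eq_neg_one_of_add_eq_neg_two hx hs hxs,
      eq_neg_one_of_add_eq_neg_two hy' ht (by rw [add_comm, hty])]
    simp only [mulVec_neg]
    abel
  · rintro rfl
    refine ⟨-1, -1, -1, -1, ⟨by simp, by simp, by simp⟩, fun _ => .inl rfl,
      ⟨by simp only [mulVec_neg, neg_add], by norm_num, by norm_num⟩, ?_⟩
    simp only [mulVec_neg]
    abel

noncomputable def union (D : HybridZonotopeData d ιg ιb ιc)
    (D' : HybridZonotopeData d ιg' ιb' ιc') :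
    HybridZonotopeData d ((ιg ⊕ (ιg ⊕ ιb)) ⊕ (ιg' ⊕ (ιg' ⊕ ιb'))) ((ιb ⊕ ιb') ⊕ Unit)
      ((ιc ⊕ (ιg ⊕ ιb)) ⊕ (ιc' ⊕ (ιg' ⊕ ιb'))) :=
  (D.gate.sum D'.gate.negSwitch).freeSwitch

theorem toSet_union (D : HybridZonotopeData d ιg ιb ιc) (D' : HybridZonotopeData d ιg' ιb' ιc') :
    (D.union D').toSet = D.toSet ∪ D'.toSet := by
  rw [union, toSet_freeSwitch, fixSwitch_sum, fixSwitch_sum, toSet_sum, toSet_sum,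
    fixSwitch_negSwitch, fixSwitch_negSwitch, neg_neg, toSet_gate_fixSwitch_one,
    toSet_gate_fixSwitch_one, toSet_gate_fixSwitch_neg_one, toSet_gate_fixSwitch_neg_one,
    Set.singleton_zero, add_zero, zero_add]

end HybridZonotopeData

/-- Hybrid zonotopes are closed under unions: if `Z₁, Z₂ ⊆ ℝⁿ` are hybrid
zonotopes, then `Z₁ ∪ Z₂` is a hybrid zonotope. -/
theorem isHybridZonotope_union {n : ℕ} (Z₁ Z₂ : Set (Fin n → ℝ))
    (hZ₁ : IsHybridZonotope Z₁) (hZ₂ : IsHybridZonotope Z₂) :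
    IsHybridZonotope (Z₁ ∪ Z₂) := by
  obtain ⟨-, -, -, D₁, rfl⟩ := hZ₁.exists_toSet_eq
  obtain ⟨-, -, -, D₂, rfl⟩ := hZ₂.exists_toSet_eq
  rw [← D₁.toSet_union D₂]
  exact (D₁.union D₂).isHybridZonotope_toSet
end

section
/- Let Z ⊆ ℝ^n be a nonempty hybrid zonotope. Then the image of Z under the maxout function, namely { max_{i∈[n]} z_i : z ∈ Z } ⊆ ℝ, is a hybrid zonotope. -/
/-!
Fixing the binary factors splits a hybrid zonotope into finitely many constrained zonotopes,
each compact and convex. The maxout function is continuous, so it maps each piece onto a compact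
interval or the empty set, and the image is a finite union of compact intervals. Such a union is
again a hybrid zonotope, with one binary factor per interval selecting it.
-/

open Matrix Set

theorem isHybridZonotope_of_fintype {d : ℕ} {ιg ιb ιc : Type*}
    [Fintype ιg] [Fintype ιb] [Fintype ιc]
    (c : Fin d → ℝ) (Gc : Matrix (Fin d) ιg ℝ) (Gb : Matrix (Fin d) ιb ℝ)
    (Ac : Matrix ιc ιg ℝ) (Ab : Matrix ιc ιb ℝ) (b : ιc → ℝ) :
    IsHybridZonotope {z | ∃ (ξc : ιg → ℝ) (ξb : ιb → ℝ),
      (∀ i, |ξc i| ≤ 1) ∧ (∀ i, ξb i = -1 ∨ ξb i = 1) ∧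
      Ac *ᵥ ξc + Ab *ᵥ ξb = b ∧ z = Gc *ᵥ ξc + Gb *ᵥ ξb + c} := by
  let eg := Fintype.equivFin ιg
  let eb := Fintype.equivFin ιb
  let ec := Fintype.equivFin ιc
  refine ⟨_, _, _, c, Gc.submatrix id eg.symm, Gb.submatrix id eb.symm,
    Ac.submatrix ec.symm eg.symm, Ab.submatrix ec.symm eb.symm, b ∘ ec.symm, ?_⟩
  have hcomp : Function.Injective fun v : ιc → ℝ => v ∘ ec.symm :=
    ec.symm.surjective.injective_comp_right
  ext z
  simp only [mem_ofPred_eq, submatrix_mulVec_equiv, Equiv.symm_symm, Function.comp_id,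
    ← Pi.add_comp, hcomp.eq_iff]
  constructor
  · rintro ⟨ξc, ξb, hc, hb, hA, rfl⟩
    refine ⟨ξc ∘ eg.symm, ξb ∘ eb.symm, fun i => hc _, fun i => hb _, ?_, ?_⟩ <;>
      simp [Function.comp_assoc, hA]
  · rintro ⟨ξc, ξb, hc, hb, hA, rfl⟩
    exact ⟨ξc ∘ eg, ξb ∘ eb, fun i => hc _, fun i => hb _, hA, rfl⟩

def constrainedZonotope {m ι κ : Type*} [Fintype ι] (c : m → ℝ) (G : Matrix m ι ℝ)
    (A : Matrix κ ι ℝ) (b : κ → ℝ) : Set (m → ℝ) :=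
  (fun ξ => G *ᵥ ξ + c) '' (Metric.closedBall 0 1 ∩ {ξ | A *ᵥ ξ = b})

section ConstrainedZonotope

variable {m ι κ : Type*} [Fintype ι] (c : m → ℝ) (G : Matrix m ι ℝ) (A : Matrix κ ι ℝ)
  (b : κ → ℝ)

theorem isCompact_constrainedZonotope : IsCompact (constrainedZonotope c G A b) :=
  ((isCompact_closedBall 0 1).inter_right
    (isClosed_eq (continuous_const.matrix_mulVec continuous_id) continuous_const)).image
    ((continuous_const.matrix_mulVec continuous_id).add continuous_const)

theorem convex_constrainedZonotope : Convex ℝ (constrainedZonotope c G A b) := by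
  have hK : Convex ℝ (Metric.closedBall (0 : ι → ℝ) 1 ∩ {ξ | A *ᵥ ξ = b}) :=
    (convex_closedBall 0 1).inter ((convex_singleton b).linear_preimage A.mulVecLin)
  simpa [constrainedZonotope, image_image, add_comm] using
    (hK.linear_image G.mulVecLin).translate c

end ConstrainedZonotope

theorem IsHybridZonotope.exists_eq_iUnion_isCompact_convex {d : ℕ} {Z : Set (Fin d → ℝ)}
    (hZ : IsHybridZonotope Z) :
    ∃ (ι : Type) (_ : Finite ι) (K : ι → Set (Fin d → ℝ)),
      (∀ i, IsCompact (K i) ∧ Convex ℝ (K i)) ∧ Z = ⋃ i, K i := by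
  obtain ⟨ng, nb, nc, c, Gc, Gb, Ac, Ab, b, rfl⟩ := hZ
  let B := {ξb : Fin nb → ℝ | ∀ i, ξb i = -1 ∨ ξb i = 1}
  have hB : B.Finite := (Set.Finite.pi (t := fun _ => {-1, 1}) fun _ => toFinite _).subset
    fun ξb hξb i _ => hξb i
  refine ⟨B, hB.to_subtype,
    fun ξb => constrainedZonotope (Gb *ᵥ ξb + c) Gc Ac (b - Ab *ᵥ ξb),
    fun _ => ⟨isCompact_constrainedZonotope .., convex_constrainedZonotope ..⟩, ?_⟩
  ext z
  simp only [add_assoc, exists_and_left, mem_ofPred_eq, constrainedZonotope, eq_sub_iff_add_eq,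
    iUnion_coe_set, mem_iUnion, mem_image, mem_inter_iff, Metric.mem_closedBall, dist_zero_right,
    zero_le_one, pi_norm_le_iff_of_nonneg, Real.norm_eq_abs, exists_prop]
  constructor
  · rintro ⟨ξc, hξc, ξb, hξb, hA, rfl⟩
    exact ⟨ξb, hξb, ξc, ⟨hξc, hA⟩, rfl⟩
  · rintro ⟨ξb, hξb, ξc, ⟨hξc, hA⟩, rfl⟩
    exact ⟨ξc, hξc, ξb, hξb, hA, rfl⟩

open Finset in
theorem sum_eq_two_sub_card_iff_existsUnique {ι : Type*} [Fintype ι] {ξ : ι → ℝ}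
    (hξ : ∀ i, ξ i = -1 ∨ ξ i = 1) :
    ∑ i, ξ i = 2 - Fintype.card ι ↔ ∃! i, ξ i = 1 := by
  classical
  have hsum : ∑ i, ξ i = 2 * #{i | ξ i = 1} - Fintype.card ι :=
    calc ∑ i, ξ i = ∑ i, (2 * (if ξ i = 1 then 1 else 0) - 1 : ℝ) := by
          refine sum_congr rfl fun i _ => ?_
          rcases hξ i with h | h <;> norm_num [h]
      _ = _ := by rw [sum_sub_distrib, ← mul_sum, sum_boole]; simp
  rw [hsum, Fintype.existsUnique_iff_card_one, sub_left_inj]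
  constructor
  · intro h
    exact_mod_cast (mul_eq_left₀ two_ne_zero).mp h
  · intro h
    simp [h]

theorem mem_Icc_iff_exists_abs_le_one {a b y : ℝ} (hab : a ≤ b) :
    y ∈ Icc a b ↔ ∃ t, |t| ≤ 1 ∧ (b - a) / 2 * t + (a + b) / 2 = y := by
  constructor
  · rintro ⟨hay, hyb⟩
    rcases hab.eq_or_lt with rfl | hlt
    · exact ⟨0, by simp, by linarith⟩
    · refine ⟨(2 * y - a - b) / (b - a), ?_, by field_simp; ring⟩
      rw [abs_le, le_div_iff₀ (by linarith), div_le_one (by linarith)]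
      constructor <;> linarith
  · rintro ⟨t, ht, rfl⟩
    obtain ⟨ht₁, ht₂⟩ := abs_le.mp ht
    constructor <;> nlinarith

theorem isHybridZonotope_iUnion_Icc {ι : Type*} [Fintype ι] (a b : ι → ℝ)
    (hab : ∀ i, a i ≤ b i) :
    IsHybridZonotope {y : Fin 1 → ℝ | y 0 ∈ ⋃ i, Icc (a i) (b i)} := by
  classical
  -- Continuous factors `Sum.elim u v`, binary factors `ξb`. Row `inl ()` of the constraint says
  -- that exactly one `ξb i` is `1`; row `inr i` says `u i + v i = ξb i - 1`, which forces
  -- `u i = -1` whenever `ξb i = -1`.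
  convert isHybridZonotope_of_fintype (fun _ => ∑ i, b i / 2)
    (fromCols (of fun _ i => (b i - a i) / 2) 0) (of fun _ i => a i / 2)
    (fromBlocks 0 0 1 1 : Matrix (Unit ⊕ ι) (ι ⊕ ι) ℝ) (fromRows (of fun _ _ => 1) (-1))
    (Sum.elim (fun _ => 2 - Fintype.card ι) (fun _ => -1)) using 1
  ext y
  rw [mem_ofPred_eq, mem_ofPred_eq, mem_iUnion, Sum.exists_sum]
  simp only [Fin.isValue, Sum.forall, fromBlocks_mulVec, zero_mulVec, add_zero, one_mulVec,
    fromRows_mulVec, funext_iff, Pi.add_apply, Sum.elim_inl, Pi.zero_apply, mulVec, dotProduct,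
    of_apply, one_mul, zero_add, forall_const, Sum.elim_inr, Function.comp_apply,
    Matrix.neg_apply, one_apply, neg_mul, ite_mul, zero_mul, Finset.sum_neg_distrib,
    Finset.sum_ite_eq, Finset.mem_univ, ↓reduceIte, fromCols_mulVec, Fin.forall_fin_one,
    ← Finset.sum_add_distrib]
  constructor
  · rintro ⟨i, hy⟩
    obtain ⟨t, ht, hty⟩ := (mem_Icc_iff_exists_abs_le_one (hab i)).mp hy
    let ξb : ι → ℝ := fun j => if j = i then 1 else -1
    have hbin : ∀ j, ξb j = -1 ∨ ξb j = 1 := fun j => by unfold ξb; split_ifs <;> simp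
    have hsum : ∑ j, ξb j = 2 - Fintype.card ι :=
      (sum_eq_two_sub_card_iff_existsUnique hbin).mpr
        ⟨i, by simp [ξb], fun j hj => by_contra fun h => by norm_num [ξb, h] at hj⟩
    refine ⟨fun j => if j = i then t else -1, fun j => if j = i then -t else -1, ξb,
      ⟨fun j => ?_, fun j => ?_⟩, hbin, ⟨hsum, fun j => ?_⟩, ?_⟩
    all_goals dsimp only [ξb]
    · split_ifs <;> simp [ht]
    · split_ifs <;> simp [ht]
    · split_ifs <;> norm_num
    · rw [Finset.sum_eq_single i (fun j _ hj => by simp [hj]; ring) (by simp)]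
      simp [← hty]
      ring
  · rintro ⟨u, v, ξb, ⟨hu, hv⟩, hbin, ⟨hsum, hrow⟩, hy⟩
    obtain ⟨i, hi, huniq⟩ := (sum_eq_two_sub_card_iff_existsUnique hbin).mp hsum
    have hoff : ∀ j ≠ i, ξb j = -1 ∧ u j = -1 := by
      intro j hj
      have hξ : ξb j = -1 := (hbin j).resolve_right fun h => hj (huniq j h)
      exact ⟨hξ, by linarith [hrow j, (abs_le.mp (hu j)).1, (abs_le.mp (hv j)).1]⟩
    refine ⟨i, (mem_Icc_iff_exists_abs_le_one (hab i)).mpr ⟨u i, hu i, ?_⟩⟩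
    rw [hy, Finset.sum_eq_single i (fun j _ hj => by simp [hoff j hj]; ring) (by simp), hi]
    ring

theorem isHybridZonotope_of_iUnion_isCompact_isPreconnected {ι : Type*} [Finite ι]
    (S : ι → Set ℝ) (hcpt : ∀ i, IsCompact (S i)) (hconn : ∀ i, IsPreconnected (S i)) :
    IsHybridZonotope {y : Fin 1 → ℝ | y 0 ∈ ⋃ i, S i} := by
  let J := {i // (S i).Nonempty}
  have : Fintype J := Fintype.ofFinite J
  have hIcc : ∀ j : J, S j = Icc (sInf (S j)) (sSup (S j)) :=
    fun j => eq_Icc_of_connected_compact ⟨j.2, hconn j⟩ (hcpt j)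
  convert isHybridZonotope_iUnion_Icc (fun j : J => sInf (S j)) (fun j => sSup (S j))
    (fun j => csInf_le_csSup j.2 (hcpt j).bddBelow (hcpt j).bddAbove) using 1
  ext y
  simp only [mem_ofPred_eq, mem_iUnion, ← hIcc]
  exact ⟨fun ⟨i, hi⟩ => ⟨⟨i, y 0, hi⟩, hi⟩, fun ⟨j, hj⟩ => ⟨j, hj⟩⟩

theorem isHybridZonotope_maxout_general {n : ℕ} (hn : 0 < n) (Z : Set (Fin n → ℝ))
    (hZ : IsHybridZonotope Z) :
    IsHybridZonotope {y : Fin 1 → ℝ | ∃ z ∈ Z,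
      y = fun _ => Finset.univ.sup' ⟨⟨0, hn⟩, Finset.mem_univ _⟩ z} := by
  obtain ⟨ι, _, K, hK, rfl⟩ := hZ.exists_eq_iUnion_isCompact_convex
  set f : (Fin n → ℝ) → ℝ := fun z => Finset.univ.sup' ⟨⟨0, hn⟩, Finset.mem_univ _⟩ z
  have hf : Continuous f := Continuous.finset_sup'_apply _ fun i _ => continuous_apply i
  convert isHybridZonotope_of_iUnion_isCompact_isPreconnected (fun i => f '' K i)
    (fun i => (hK i).1.image hf) (fun i => (hK i).2.isPreconnected.image f hf.continuousOn)
    using 1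
  ext y
  simp only [mem_iUnion, funext_iff, Fin.forall_fin_one, mem_ofPred_eq, mem_image]
  constructor
  · rintro ⟨z, ⟨i, hz⟩, hy⟩
    exact ⟨i, z, hz, hy.symm⟩
  · rintro ⟨i, z, hz, hy⟩
    exact ⟨z, ⟨i, hz⟩, hy.symm⟩

/-- If `Z ⊆ ℝⁿ` is a nonempty hybrid zonotope, then the image of `Z` under the
maxout function `z ↦ max_{i ∈ [n]} z_i`, viewed as a subset of `ℝ = ℝ¹`, is a hybrid
zonotope. -/
theorem isHybridZonotope_maxout {n : ℕ} (hn : 0 < n) (Z : Set (Fin n → ℝ))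
    (hZne : Z.Nonempty) (hZ : IsHybridZonotope Z) :
    IsHybridZonotope {y : Fin 1 → ℝ | ∃ z ∈ Z,
      y = fun _ => Finset.univ.sup' ⟨⟨0, hn⟩, Finset.mem_univ _⟩ z} :=
  isHybridZonotope_maxout_general hn Z hZ
end
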